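/- arXiv:math/0508230 — 3 statements merged into one kernel-verified Lean document; each statement's English description precedes it below -/
import Mathlib

section
/- Assume the box-diagonal EPCAG setting and condition (bw). Fix N > 0, α ∈ (0,σ) and t₀ ∈ ℝ, and let z = (u,v) : ℝ → ℝᵏ × ℝ^{n−k} be a continuous function with ‖z(t)‖ ≤ N·exp(−α(t−t₀)) for all t ≥ t₀. Then z is a solution of system (3*) on ℝ if and only if for every t ∈ ℝ: u(t) = U(t,t₀)u(t₀) + ∫_{t₀}^{t} U(t,s)·g₊(s, z(s), z(β(s))) ds and v(t) = −∫_{t}^{∞} V(t,s)·g₋(s, z(s), z(β(s))) ds (the improper integral converging). -/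
open Set Real Filter MeasureTheory Topology

noncomputable section

section Gron
variable {E : Type*} [NormedAddCommGroup E] [NormedSpace ℝ E]

lemma gron_right {f f' : ℝ → E} {C a b : ℝ}
    (hf : ContinuousOn f (Icc a b))
    (hd : ∀ x ∈ Ico a b, HasDerivWithinAt f (f' x) (Ici x) x)
    (hb : ∀ x ∈ Ico a b, ‖f' x‖ ≤ C * ‖f x‖) (hab : a ≤ b) :
    ‖f b‖ ≤ ‖f a‖ * Real.exp (C * (b - a)) := by
  have := norm_le_gronwallBound_of_norm_deriv_right_le (δ := ‖f a‖) (ε := 0) hf hd le_rfl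
    (fun x hx => by simpa using hb x hx) b ⟨hab, le_rfl⟩
  rwa [gronwallBound_ε0] at this

lemma gron_interior {f f' : ℝ → E} {C a b : ℝ} (hC : 0 ≤ C)
    (hf : ContinuousOn f (Icc a b))
    (hd : ∀ x ∈ Ioo a b, HasDerivAt f (f' x) x)
    (hb : ∀ x ∈ Ioo a b, ‖f' x‖ ≤ C * ‖f x‖) (hab : a ≤ b) :
    ‖f b‖ ≤ ‖f a‖ * Real.exp (C * (b - a)) := by
  rcases eq_or_lt_of_le hab with rfl | hab
  · simp
  · have key : ∀ a' ∈ Ioo a b, ‖f b‖ ≤ ‖f a'‖ * Real.exp (C * (b - a)) := by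
      intro a' ha'
      have h1 : ‖f b‖ ≤ ‖f a'‖ * Real.exp (C * (b - a')) :=
        gron_right (hf.mono (Icc_subset_Icc_left ha'.1.le))
          (fun x hx => ((hd x ⟨lt_of_lt_of_le ha'.1 hx.1, hx.2⟩).hasDerivWithinAt))
          (fun x hx => hb x ⟨lt_of_lt_of_le ha'.1 hx.1, hx.2⟩) ha'.2.le
      refine h1.trans (mul_le_mul_of_nonneg_left (Real.exp_le_exp.2 ?_) (norm_nonneg _))
      nlinarith [ha'.1]
    have hten : Tendsto (fun a' => ‖f a'‖ * Real.exp (C * (b - a))) (𝓝[>] a)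
        (𝓝 (‖f a‖ * Real.exp (C * (b - a)))) := by
      have h0 : ContinuousWithinAt f (Icc a b) a := hf.continuousWithinAt ⟨le_rfl, hab.le⟩
      have h2 : Tendsto f (𝓝[>] a) (𝓝 (f a)) :=
        h0.mono_of_mem_nhdsWithin (Icc_mem_nhdsGT_of_mem ⟨le_rfl, hab⟩)
      exact (h2.norm).mul_const _
    exact ge_of_tendsto hten
      (Filter.eventually_of_mem (Ioo_mem_nhdsGT_of_mem ⟨le_rfl, hab⟩) key)

lemma gron_interior_rev {f f' : ℝ → E} {C a b : ℝ} (hC : 0 ≤ C)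
    (hf : ContinuousOn f (Icc a b))
    (hd : ∀ x ∈ Ioo a b, HasDerivAt f (f' x) x)
    (hb : ∀ x ∈ Ioo a b, ‖f' x‖ ≤ C * ‖f x‖) (hab : a ≤ b) :
    ‖f a‖ ≤ ‖f b‖ * Real.exp (C * (b - a)) := by
  have key := gron_interior (f := fun x => f (-x)) (f' := fun x => -f' (-x)) hC
    (a := -b) (b := -a) ?_ ?_ ?_ (by linarith)
  · simp only [neg_neg] at key
    convert key using 3
    ring
  · exact hf.comp continuous_neg.continuousOn (fun x hx => ⟨by linarith [hx.2], by linarith [hx.1]⟩)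
  · intro x hx
    have hdd : HasDerivAt f (f' (-x)) (-x) := hd (-x) ⟨by linarith [hx.2], by linarith [hx.1]⟩
    simpa [Function.comp_def] using hdd.scomp x (hasDerivAt_neg x)
  · intro x hx
    simpa using hb (-x) ⟨by linarith [hx.2], by linarith [hx.1]⟩

lemma gron_global {f f' : ℝ → E} {C : ℝ} (hC : 0 ≤ C)
    (hd : ∀ x, HasDerivAt f (f' x) x)
    (hb : ∀ x, ‖f' x‖ ≤ C * ‖f x‖) (s t : ℝ) :
    ‖f t‖ ≤ ‖f s‖ * Real.exp (C * |t - s|) := by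
  have hc : ∀ a b : ℝ, ContinuousOn f (Icc a b) :=
    fun a b => fun x _ => (hd x).continuousAt.continuousWithinAt
  rcases le_total s t with h | h
  · rw [abs_of_nonneg (by linarith)]
    exact gron_interior hC (hc s t) (fun x _ => hd x) (fun x _ => hb x) h
  · rw [abs_of_nonpos (by linarith)]
    have := gron_interior_rev hC (hc t s) (fun x _ => hd x) (fun x _ => hb x) h
    simpa [neg_sub] using this

lemma gron_zero {f f' : ℝ → E} {C : ℝ} (hC : 0 ≤ C)
    (hd : ∀ x, HasDerivAt f (f' x) x)
    (hb : ∀ x, ‖f' x‖ ≤ C * ‖f x‖) {s : ℝ} (hs : f s = 0) (t : ℝ) : f t = 0 := by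
  have := gron_global hC hd hb s t
  rw [hs] at this
  simpa using norm_le_zero_iff.mp (by simpa using this)

end Gron

section Trans
variable {F : Type*} [NormedAddCommGroup F] [NormedSpace ℝ F]
variable {B : ℝ → F →L[ℝ] F} {W : ℝ → ℝ → F →L[ℝ] F} {μ : ℝ}

lemma trans_deriv_norm (hμ : ∀ t, ‖B t‖ ≤ μ) (X : F →L[ℝ] F) (t : ℝ) :
    ‖(B t).comp X‖ ≤ μ * ‖X‖ :=
  le_trans (ContinuousLinearMap.opNorm_comp_le _ _)
    (mul_le_mul_of_nonneg_right (hμ t) (norm_nonneg _))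

lemma trans_norm_le
    (hid : ∀ s, W s s = ContinuousLinearMap.id ℝ F)
    (hder : ∀ s t, HasDerivAt (fun r => W r s) ((B t).comp (W t s)) t)
    (hμ : ∀ t, ‖B t‖ ≤ μ) (hμ0 : 0 ≤ μ) (t s : ℝ) :
    ‖W t s‖ ≤ Real.exp (μ * |t - s|) := by
  have h := gron_global (f := fun t => W t s) (f' := fun t => (B t).comp (W t s)) hμ0
    (hder s) (fun x => trans_deriv_norm hμ _ x) s t
  refine h.trans ?_
  have : ‖W s s‖ ≤ 1 := by rw [hid s]; exact ContinuousLinearMap.norm_id_le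
  nlinarith [Real.exp_pos (μ * |t - s|)]

lemma trans_cocycle
    (hid : ∀ s, W s s = ContinuousLinearMap.id ℝ F)
    (hder : ∀ s t, HasDerivAt (fun r => W r s) ((B t).comp (W t s)) t)
    (hμ : ∀ t, ‖B t‖ ≤ μ) (hμ0 : 0 ≤ μ) (t r s : ℝ) :
    W t s = (W t r).comp (W r s) := by
  have key : ∀ τ, W τ s - (W τ r).comp (W r s) = 0 := by
    refine gron_zero (f' := fun τ => (B τ).comp (W τ s - (W τ r).comp (W r s))) hμ0 ?_
      (fun x => trans_deriv_norm hμ _ x) (s := r) ?_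
    · intro τ
      have h1 := hder s τ
      have h2 : HasDerivAt (fun y => (W y r).comp (W r s))
          (((B τ).comp (W τ r)).comp (W r s) + (W τ r).comp 0) τ :=
        (hder r τ).clm_comp (hasDerivAt_const τ (W r s))
      have h3 := h1.sub h2
      refine h3.congr_deriv (Eq.symm ?_)
      simp only [ContinuousLinearMap.comp_zero, add_zero, ContinuousLinearMap.comp_sub,
        ContinuousLinearMap.comp_assoc]
    · rw [hid r, ContinuousLinearMap.id_comp, sub_self]
  have := key t
  rwa [sub_eq_zero] at this

end Trans

section Trans2
variable {F : Type*} [NormedAddCommGroup F] [NormedSpace ℝ F]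
variable {B : ℝ → F →L[ℝ] F} {W : ℝ → ℝ → F →L[ℝ] F} {μ : ℝ}

lemma trans_cont1 (hder : ∀ s t, HasDerivAt (fun r => W r s) ((B t).comp (W t s)) t) (s : ℝ) :
    Continuous fun t => W t s :=
  continuous_iff_continuousAt.2 fun t => (hder s t).continuousAt

lemma trans_cont2
    (hid : ∀ s, W s s = ContinuousLinearMap.id ℝ F)
    (hder : ∀ s t, HasDerivAt (fun r => W r s) ((B t).comp (W t s)) t)
    (hμ : ∀ t, ‖B t‖ ≤ μ) (hμ0 : 0 ≤ μ) (a : ℝ) :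
    Continuous fun s => W a s := by
  rw [continuous_iff_continuousAt]
  intro s₀
  rw [ContinuousAt, tendsto_iff_norm_sub_tendsto_zero]
  have key : ∀ s ∈ Icc (s₀ - 1) (s₀ + 1),
      ‖W a s - W a s₀‖ ≤ (‖W a s₀‖ * (μ * Real.exp (μ * 2))) * |s - s₀| := by
    intro s hs
    have hco : W a s - W a s₀ = (W a s₀).comp (W s₀ s - W s s) := by
      have h1 := trans_cocycle hid hder hμ hμ0 a s₀ s
      have h2 : W s₀ s - W s s = W s₀ s - ContinuousLinearMap.id ℝ F := by rw [hid s]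
      rw [h2, ContinuousLinearMap.comp_sub, ← h1, ContinuousLinearMap.comp_id]
    have hmvt : ‖W s₀ s - W s s‖ ≤ (μ * Real.exp (μ * 2)) * ‖s₀ - s‖ := by
      have := Convex.norm_image_sub_le_of_norm_hasDerivWithin_le
        (f := fun r => W r s) (f' := fun r => (B r).comp (W r s))
        (s := Icc (s₀ - 1) (s₀ + 1)) (C := μ * Real.exp (μ * 2))
        (fun x _ => (hder s x).hasDerivWithinAt) ?_ (convex_Icc _ _) hs
        (show s₀ ∈ Icc (s₀ - 1) (s₀ + 1) from ⟨by linarith, by linarith⟩)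
      · simpa using this
      · intro x hx
        refine (trans_deriv_norm hμ _ x).trans ?_
        have h1 : ‖W x s‖ ≤ Real.exp (μ * |x - s|) := trans_norm_le hid hder hμ hμ0 x s
        have h2 : |x - s| ≤ 2 := by
          rw [abs_le]; constructor <;> [linarith [hx.1, hs.2]; linarith [hx.2, hs.1]]
        have h3 : Real.exp (μ * |x - s|) ≤ Real.exp (μ * 2) :=
          Real.exp_le_exp.2 (by nlinarith)
        nlinarith [Real.exp_pos (μ * |x - s|)]
    calc ‖W a s - W a s₀‖ ≤ ‖W a s₀‖ * ‖W s₀ s - W s s‖ := by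
          rw [hco]; exact ContinuousLinearMap.opNorm_comp_le _ _
    _ ≤ (‖W a s₀‖ * (μ * Real.exp (μ * 2))) * |s - s₀| := by
          rw [show ‖s₀ - s‖ = |s - s₀| by rw [Real.norm_eq_abs, abs_sub_comm]] at hmvt
          rw [mul_assoc]
          exact mul_le_mul_of_nonneg_left hmvt (norm_nonneg _)
  have hb : Tendsto (fun s => (‖W a s₀‖ * (μ * Real.exp (μ * 2))) * |s - s₀|) (𝓝 s₀) (𝓝 0) := by
    have hcont : Continuous fun s : ℝ => (‖W a s₀‖ * (μ * Real.exp (μ * 2))) * |s - s₀| :=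
      continuous_const.mul ((continuous_id.sub continuous_const).abs)
    have := hcont.tendsto s₀
    simpa using this
  refine squeeze_zero' ?_ ?_ hb
  · exact Filter.Eventually.of_forall fun s => norm_nonneg _
  · exact Filter.eventually_of_mem (Icc_mem_nhds (by linarith) (by linarith)) key

end Trans2

section Theta

lemma exists_indx (θ : ℤ → ℝ) (hθtop : Tendsto θ atTop atTop) (hθbot : Tendsto θ atBot atBot)
    (t : ℝ) : ∃ i : ℤ, θ i ≤ t ∧ t < θ (i + 1) ∧ ∀ j, θ j ≤ t → j ≤ i := by
  have hbdd : ∃ b : ℤ, ∀ z : ℤ, θ z ≤ t → z ≤ b := by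
    obtain ⟨b, hb⟩ := eventually_atTop.1 (hθtop.eventually_gt_atTop t)
    exact ⟨b, fun z hz => by by_contra hc; push_neg at hc; exact absurd hz (not_le.2 (hb z hc.le))⟩
  have hinh : ∃ z : ℤ, θ z ≤ t := by
    obtain ⟨b, hb⟩ := eventually_atBot.1 (hθbot.eventually_le_atBot t)
    exact ⟨b, hb b le_rfl⟩
  obtain ⟨i, hi, hmax⟩ := Int.exists_greatest_of_bdd hbdd hinh
  refine ⟨i, hi, ?_, hmax⟩
  by_contra hc
  push_neg at hc
  exact absurd (hmax _ hc) (by omega)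

lemma back_unique {F : Type*} [NormedAddCommGroup F] [NormedSpace ℝ F]
    {θ : ℤ → ℝ} (hθmono : StrictMono θ)
    (hgr : ∀ t : ℝ, ∃ i, θ i ≤ t ∧ t < θ (i + 1) ∧ ∀ j, θ j ≤ t → j ≤ i)
    {w D : ℝ → F} {C : ℝ} (hC : 0 ≤ C) (hwc : Continuous w)
    (hd : ∀ x, x ∉ Set.range θ → HasDerivAt w (D x) x)
    (hD : ∀ x, ‖D x‖ ≤ C * ‖w x‖) :
    ∀ t s : ℝ, t ≤ s → ‖w t‖ ≤ ‖w s‖ * Real.exp (C * (s - t)) := by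
  choose I h1 h2 h3 using hgr
  have step : ∀ t s : ℝ, t ≤ s → (∀ j, θ j ∉ Ioo t s) →
      ‖w t‖ ≤ ‖w s‖ * Real.exp (C * (s - t)) := by
    intro t s hts hno
    exact gron_interior_rev hC hwc.continuousOn
      (fun x hx => hd x (by rintro ⟨j, rfl⟩; exact hno j hx))
      (fun x _ => hD x) hts
  have same : ∀ t s : ℝ, t ≤ s → I s ≤ I t →
      ‖w t‖ ≤ ‖w s‖ * Real.exp (C * (s - t)) := by
    intro t s hts hIle
    apply step t s hts
    intro j hj
    have hj1 : j ≤ I s := h3 s j hj.2.le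
    have hj2 : θ j ≤ θ (I t) := hθmono.monotone (hj1.trans hIle)
    exact absurd (lt_of_lt_of_le hj.1 (hj2.trans (h1 t))) (lt_irrefl t)
  have main : ∀ n : ℕ, ∀ t s : ℝ, t ≤ s → (I s - I t).toNat ≤ n →
      ‖w t‖ ≤ ‖w s‖ * Real.exp (C * (s - t)) := by
    intro n
    induction n with
    | zero =>
      intro t s hts hn
      exact same t s hts (by omega)
    | succ n IH =>
      intro t s hts hn
      by_cases hcase : I s ≤ I t
      · exact same t s hts hcase
      · push_neg at hcase
        set c := θ (I t + 1) with hc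
        have htc : t < c := h2 t
        have hcs : c ≤ s := le_trans (hθmono.monotone (by omega : I t + 1 ≤ I s)) (h1 s)
        have hIc : I c = I t + 1 := by
          have hub : I c ≤ I t + 1 := (hθmono.le_iff_le).1 (h1 c)
          have hlb : I t + 1 ≤ I c := h3 c (I t + 1) le_rfl
          omega
        have hstep1 : ‖w t‖ ≤ ‖w c‖ * Real.exp (C * (c - t)) := by
          apply step t c htc.le
          intro j hj
          have : j ≤ I t := by
            have : j < I t + 1 := (hθmono.lt_iff_lt).1 hj.2
            omega
          exact absurd (lt_of_lt_of_le hj.1 ((hθmono.monotone this).trans (h1 t)))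
            (lt_irrefl t)
        have hstep2 : ‖w c‖ ≤ ‖w s‖ * Real.exp (C * (s - c)) := IH c s hcs (by omega)
        calc ‖w t‖ ≤ (‖w s‖ * Real.exp (C * (s - c))) * Real.exp (C * (c - t)) :=
              le_trans hstep1 (mul_le_mul_of_nonneg_right hstep2 (Real.exp_pos _).le)
        _ = ‖w s‖ * Real.exp (C * (s - t)) := by
              rw [mul_assoc, ← Real.exp_add]
              ring_nf
  intro t s hts
  exact main (I s - I t).toNat t s hts le_rfl

end Theta

section Joint

lemma jointly_cont {X Y : Type*} [NormedAddCommGroup X] [NormedAddCommGroup Y]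
    (g : ℝ → X → X → Y) {L : ℝ} (hL : 0 ≤ L)
    (hc : ∀ z w, Continuous fun t => g t z w)
    (hlip : ∀ (t : ℝ) (z₁ w₁ z₂ w₂ : X),
      ‖g t z₁ w₁ - g t z₂ w₂‖ ≤ L * (‖z₁ - z₂‖ + ‖w₁ - w₂‖)) :
    Continuous fun p : ℝ × X × X => g p.1 p.2.1 p.2.2 := by
  rw [continuous_iff_continuousAt]
  rintro ⟨t₀, z₀, w₀⟩
  rw [ContinuousAt, tendsto_iff_norm_sub_tendsto_zero]
  have key : ∀ p : ℝ × X × X, ‖g p.1 p.2.1 p.2.2 - g t₀ z₀ w₀‖ ≤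
      L * (‖p.2.1 - z₀‖ + ‖p.2.2 - w₀‖) + ‖g p.1 z₀ w₀ - g t₀ z₀ w₀‖ := by
    intro p
    calc ‖g p.1 p.2.1 p.2.2 - g t₀ z₀ w₀‖
        ≤ ‖g p.1 p.2.1 p.2.2 - g p.1 z₀ w₀‖ + ‖g p.1 z₀ w₀ - g t₀ z₀ w₀‖ := by
          rw [← sub_add_sub_cancel (g p.1 p.2.1 p.2.2) (g p.1 z₀ w₀) (g t₀ z₀ w₀)]
          exact norm_add_le _ _
    _ ≤ _ := add_le_add (hlip _ _ _ _ _) le_rfl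
  refine squeeze_zero (fun p => norm_nonneg _) key ?_
  have hb : Continuous fun p : ℝ × X × X =>
      L * (‖p.2.1 - z₀‖ + ‖p.2.2 - w₀‖) + ‖g p.1 z₀ w₀ - g t₀ z₀ w₀‖ :=
    (continuous_const.mul
      (((continuous_snd.fst).sub continuous_const).norm.add
        ((continuous_snd.snd).sub continuous_const).norm)).add
      (((hc z₀ w₀).comp continuous_fst).sub continuous_const).norm
  have := hb.tendsto (t₀, z₀, w₀)
  simpa using this

end Joint

section IntHelp
variable {F : Type*} [NormedAddCommGroup F] [NormedSpace ℝ F]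
variable {W : ℝ → F →L[ℝ] F} {g : ℝ → F}

set_option synthInstance.maxHeartbeats 1000000 in
lemma clm_apply_aesm (hW : Continuous W)
    (hg : AEStronglyMeasurable g (volume : Measure ℝ)) :
    AEStronglyMeasurable (fun s => W s (g s)) (volume : Measure ℝ) :=
  isBoundedBilinearMap_apply.continuous.comp_aestronglyMeasurable
    (hW.aestronglyMeasurable.prodMk hg)

lemma intInt (hW : Continuous W) (hg : AEStronglyMeasurable g (volume : Measure ℝ))
    (hb : ∀ a b : ℝ, ∃ R, ∀ s ∈ Icc a b, ‖g s‖ ≤ R) (a b : ℝ) :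
    IntervalIntegrable (fun s => W s (g s)) volume a b := by
  rw [intervalIntegrable_iff]
  obtain ⟨R, hR⟩ := hb (min a b) (max a b)
  obtain ⟨Rw, hRw⟩ := (isCompact_Icc (a := min a b) (b := max a b)).exists_bound_of_continuousOn
    hW.continuousOn
  refine Integrable.mono' (g := fun _ => Rw * R)
    (integrableOn_const measure_Ioc_lt_top.ne) ((clm_apply_aesm hW hg).restrict) ?_
  refine (ae_restrict_iff' measurableSet_uIoc).2 (Filter.Eventually.of_forall fun s hs => ?_)
  have hs' : s ∈ Icc (min a b) (max a b) := Ioc_subset_Icc_self hs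
  calc ‖W s (g s)‖ ≤ ‖W s‖ * ‖g s‖ := (W s).le_opNorm _
  _ ≤ Rw * R := mul_le_mul (hRw s hs') (hR s hs') (norm_nonneg _)
      ((norm_nonneg _).trans (hRw s hs'))

end IntHelp

section ExpInt

lemma exp_shift_integrable {c : ℝ} (hc : 0 < c) (s : ℝ) :
    IntegrableOn (fun r => Real.exp (-c * (r - s))) (Ioi s) volume := by
  have : (fun r => Real.exp (-c * (r - s))) = fun r => Real.exp (c * s) * Real.exp (-c * r) := by
    funext r
    rw [← Real.exp_add]
    congr 1
    ring
  rw [this]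
  exact (exp_neg_integrableOn_Ioi s hc).const_mul _

lemma exp_shift_integral {c : ℝ} (hc : 0 < c) (s : ℝ) :
    (∫ r in Ioi s, Real.exp (-c * (r - s))) = c⁻¹ := by
  have hderiv : ∀ x ∈ Ici s, HasDerivAt (fun r => -c⁻¹ * Real.exp (-c * (r - s)))
      (Real.exp (-c * (x - s))) x := by
    intro x _
    have h1 : HasDerivAt (fun r : ℝ => -c * (r - s)) (-c) x := by
      simpa using ((hasDerivAt_id x).sub_const s).const_mul (-c)
    have h2 : HasDerivAt (fun r => Real.exp (-c * (r - s))) (Real.exp (-c * (x - s)) * (-c)) x :=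
      (Real.hasDerivAt_exp _).comp x h1
    have h3 := h2.const_mul (-c⁻¹)
    refine h3.congr_deriv (Eq.symm ?_)
    field_simp [hc.ne']
  have htend : Tendsto (fun r => -c⁻¹ * Real.exp (-c * (r - s))) atTop (𝓝 0) := by
    have h1 : Tendsto (fun r : ℝ => -c * (r - s)) atTop atBot := by
      apply Tendsto.const_mul_atTop_of_neg (neg_neg_iff_pos.2 hc)
      simpa [sub_eq_add_neg] using tendsto_atTop_add_const_right atTop (-s) tendsto_id
    have h2 : Tendsto (fun r : ℝ => Real.exp (-c * (r - s))) atTop (𝓝 0) :=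
      Real.tendsto_exp_atBot.comp h1
    simpa using h2.const_mul (-c⁻¹)
  have := integral_Ioi_of_hasDerivAt_of_tendsto' hderiv (exp_shift_integrable hc s) htend
  rw [this]
  simp

end ExpInt

abbrev Ek (k : ℕ) : Type := EuclideanSpace ℝ (Fin k)

/-- `z` is a solution of the box-diagonal EPCAG system (3*) on the set `J`:
`z` is continuous on `J`, has the prescribed right derivative at every point of `J`,
and at points not of the form `θ i` it is differentiable (within `J`). -/
def SolOn {k m : ℕ} (θ : ℤ → ℝ) (β : ℝ → ℝ)
    (Bp : ℝ → Ek k →L[ℝ] Ek k) (Bm : ℝ → Ek m →L[ℝ] Ek m)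
    (gp : ℝ → Ek k × Ek m → Ek k × Ek m → Ek k)
    (gm : ℝ → Ek k × Ek m → Ek k × Ek m → Ek m)
    (z : ℝ → Ek k × Ek m) (J : Set ℝ) : Prop :=
  ContinuousOn z J ∧
  ∀ t ∈ J,
    (HasDerivWithinAt (fun s => (z s).1)
        (Bp t (z t).1 + gp t (z t) (z (β t))) (Ici t ∩ J) t ∧
      HasDerivWithinAt (fun s => (z s).2)
        (Bm t (z t).2 + gm t (z t) (z (β t))) (Ici t ∩ J) t) ∧
    (t ∉ Set.range θ →
      HasDerivWithinAt (fun s => (z s).1)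
        (Bp t (z t).1 + gp t (z t) (z (β t))) J t ∧
      HasDerivWithinAt (fun s => (z s).2)
        (Bm t (z t).2 + gm t (z t) (z (β t))) J t)

set_option maxHeartbeats 1600000 in
theorem stmt_3
    (k m : ℕ) (hk : 1 ≤ k) (hm : 1 ≤ m)
    (θ : ℤ → ℝ) (hθmono : StrictMono θ)
    (θb : ℝ) (hθb : 0 < θb) (hgap : ∀ i : ℤ, θ (i + 1) - θ i ≤ θb)
    (hθtop : Tendsto θ atTop atTop) (hθbot : Tendsto θ atBot atBot)
    (β : ℝ → ℝ) (hβ : ∀ (i : ℤ) (t : ℝ), θ i ≤ t → t < θ (i + 1) → β t = θ i)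
    (Bp : ℝ → Ek k →L[ℝ] Ek k) (Bm : ℝ → Ek m →L[ℝ] Ek m)
    (hBp : Continuous Bp) (hBm : Continuous Bm)
    (U : ℝ → ℝ → Ek k →L[ℝ] Ek k) (V : ℝ → ℝ → Ek m →L[ℝ] Ek m)
    (hUid : ∀ s : ℝ, U s s = ContinuousLinearMap.id ℝ (Ek k))
    (hVid : ∀ s : ℝ, V s s = ContinuousLinearMap.id ℝ (Ek m))
    (hUderiv : ∀ s t : ℝ, HasDerivAt (fun r => U r s) ((Bp t).comp (U t s)) t)
    (hVderiv : ∀ s t : ℝ, HasDerivAt (fun r => V r s) ((Bm t).comp (V t s)) t)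
    (K σ : ℝ) (hK : 1 ≤ K) (hσ : 0 < σ)
    (hU : ∀ s t : ℝ, s ≤ t → ‖U t s‖ ≤ K * Real.exp (-σ * (t - s)))
    (hV : ∀ s t : ℝ, t ≤ s → ‖V t s‖ ≤ K * Real.exp (-σ * (s - t)))
    (gp : ℝ → Ek k × Ek m → Ek k × Ek m → Ek k)
    (gm : ℝ → Ek k × Ek m → Ek k × Ek m → Ek m)
    (hgpc : ∀ zz ww, Continuous fun t => gp t zz ww)
    (hgmc : ∀ zz ww, Continuous fun t => gm t zz ww)
    (L : ℝ) (hL : 0 < L)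
    (hlip : ∀ (t : ℝ) (z₁ w₁ z₂ w₂ : Ek k × Ek m),
      ‖gp t z₁ w₁ - gp t z₂ w₂‖ + ‖gm t z₁ w₁ - gm t z₂ w₂‖ ≤
        L * (‖z₁ - z₂‖ + ‖w₁ - w₂‖))
    (hg0 : ∀ t : ℝ, gp t 0 0 = 0 ∧ gm t 0 0 = 0)
    (μ : ℝ) (hμ : ∀ t : ℝ, ‖Bp t‖ ≤ μ ∧ ‖Bm t‖ ≤ μ)
    (hbw : L * Real.exp (μ * θb) * θb *
        (1 + Real.exp (μ * θb) * (1 + L * θb) * Real.exp (Real.exp (μ * θb) * L * θb)) <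
      Real.exp (-(μ * θb)))
    (N α t₀ : ℝ) (hN : 0 < N) (hα : 0 < α) (hασ : α < σ)
    (z : ℝ → Ek k × Ek m) (hzc : Continuous z)
    (hdecay : ∀ t : ℝ, t₀ ≤ t → ‖z t‖ ≤ N * Real.exp (-α * (t - t₀))) :
    SolOn θ β Bp Bm gp gm z Set.univ ↔
      ∀ t : ℝ,
        ((z t).1 = U t t₀ (z t₀).1 + ∫ s in t₀..t, U t s (gp s (z s) (z (β s)))) ∧
        IntegrableOn (fun s => V t s (gm s (z s) (z (β s)))) (Ioi t) ∧
        (z t).2 = -∫ s in Ioi t, V t s (gm s (z s) (z (β s))) := by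
  classical
  have hμ0 : (0:ℝ) ≤ μ := (norm_nonneg (Bp 0)).trans (hμ 0).1
  have hμp : ∀ t, ‖Bp t‖ ≤ μ := fun t => (hμ t).1
  have hμm : ∀ t, ‖Bm t‖ ≤ μ := fun t => (hμ t).2
  set gP : ℝ → Ek k := fun s => gp s (z s) (z (β s)) with hgPdef
  set gM : ℝ → Ek m := fun s => gm s (z s) (z (β s)) with hgMdef
  -- θ index structure
  have hgr : ∀ t : ℝ, ∃ i, θ i ≤ t ∧ t < θ (i + 1) ∧ ∀ j, θ j ≤ t → j ≤ i :=
    exists_indx θ hθtop hθbot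
  have hβval : ∀ t : ℝ, ∃ i : ℤ, θ i ≤ t ∧ t < θ (i + 1) ∧ β t = θ i := by
    intro t; obtain ⟨i, h1, h2, _⟩ := hgr t; exact ⟨i, h1, h2, hβ i t h1 h2⟩
  have hβle : ∀ t, β t ≤ t := by
    intro t; obtain ⟨i, h1, _, h3⟩ := hβval t; rw [h3]; exact h1
  have hβgt : ∀ t, t - θb ≤ β t := by
    intro t; obtain ⟨i, h1, h2, h3⟩ := hβval t; rw [h3]
    have := hgap i; linarith
  have hβmono : Monotone β := by
    intro a b hab
    obtain ⟨i, ha1, _, ha3⟩ := hβval a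
    obtain ⟨j, hb1, hb2, hbmax⟩ := hgr b
    rw [ha3, hβ j b hb1 hb2]
    exact hθmono.monotone (hbmax i (ha1.trans hab))
  have hβmeas : Measurable β := hβmono.measurable
  have hβright : ∀ t : ℝ, ∀ᶠ s in 𝓝[≥] t, β s = β t := by
    intro t
    obtain ⟨i, h1, h2, h3⟩ := hβval t
    filter_upwards [Ico_mem_nhdsGE_of_mem (⟨le_rfl, h2⟩ : t ∈ Ico t (θ (i + 1)))] with s hs
    rw [hβ i s (h1.trans hs.1) hs.2, h3]
  have hβnhds : ∀ t ∉ Set.range θ, ∀ᶠ s in 𝓝 t, β s = β t := by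
    intro t ht
    obtain ⟨i, h1, h2, h3⟩ := hβval t
    have h1' : θ i < t := lt_of_le_of_ne h1 (fun he => ht ⟨i, he⟩)
    filter_upwards [Ioo_mem_nhds h1' h2] with s hs
    rw [hβ i s hs.1.le hs.2, h3]
  -- joint continuity of gp, gm
  have hGp : Continuous fun p : ℝ × (Ek k × Ek m) × (Ek k × Ek m) => gp p.1 p.2.1 p.2.2 :=
    jointly_cont gp hL.le hgpc
      (fun t a b c d => le_trans (le_add_of_nonneg_right (norm_nonneg _)) (hlip t a b c d))
  have hGm : Continuous fun p : ℝ × (Ek k × Ek m) × (Ek k × Ek m) => gm p.1 p.2.1 p.2.2 :=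
    jointly_cont gm hL.le hgmc
      (fun t a b c d => le_trans (le_add_of_nonneg_left (norm_nonneg _)) (hlip t a b c d))
  have hinner_aesm : AEStronglyMeasurable (fun s : ℝ => (s, (z s, z (β s)))) volume :=
    aestronglyMeasurable_id.prodMk (hzc.aestronglyMeasurable.prodMk
      ((hzc.measurable.comp hβmeas).aestronglyMeasurable))
  have hgP_aesm : AEStronglyMeasurable gP (volume : Measure ℝ) :=
    hGp.comp_aestronglyMeasurable hinner_aesm
  have hgM_aesm : AEStronglyMeasurable gM (volume : Measure ℝ) :=
    hGm.comp_aestronglyMeasurable hinner_aesm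
  have hzb_right : ∀ t : ℝ, ContinuousWithinAt (fun s => z (β s)) (Ici t) t := by
    intro t
    have he : (fun s => z (β s)) =ᶠ[𝓝[≥] t] (fun _ => z (β t)) :=
      (hβright t).mono (fun s hs => by simp only [hs])
    exact (tendsto_const_nhds.congr' he.symm : ContinuousWithinAt _ _ _)
  have hgP_right : ∀ t : ℝ, ContinuousWithinAt gP (Ici t) t := fun t =>
    hGp.continuousAt.comp_continuousWithinAt
      (continuousWithinAt_id.prodMk ((hzc.continuousAt.continuousWithinAt).prodMk (hzb_right t)))
  have hgM_right : ∀ t : ℝ, ContinuousWithinAt gM (Ici t) t := fun t =>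
    hGm.continuousAt.comp_continuousWithinAt
      (continuousWithinAt_id.prodMk ((hzc.continuousAt.continuousWithinAt).prodMk (hzb_right t)))
  have hzb_at : ∀ t ∉ Set.range θ, ContinuousAt (fun s => z (β s)) t := by
    intro t ht
    have he : (fun s => z (β s)) =ᶠ[𝓝 t] (fun _ => z (β t)) :=
      (hβnhds t ht).mono (fun s hs => by simp only [hs])
    exact (tendsto_const_nhds.congr' he.symm : ContinuousAt _ _)
  have hgP_at : ∀ t ∉ Set.range θ, ContinuousAt gP t := fun t ht =>
    hGp.continuousAt.comp (continuousAt_id.prodMk (hzc.continuousAt.prodMk (hzb_at t ht)))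
  have hgM_at : ∀ t ∉ Set.range θ, ContinuousAt gM t := fun t ht =>
    hGm.continuousAt.comp (continuousAt_id.prodMk (hzc.continuousAt.prodMk (hzb_at t ht)))
  -- bounds
  have hzbdd : ∀ a b : ℝ, ∃ Cz : ℝ, 0 ≤ Cz ∧ ∀ s ∈ Icc a b, ‖z s‖ ≤ Cz := by
    intro a b
    obtain ⟨Cz, hCz⟩ :=
      (isCompact_Icc (a := a) (b := b)).exists_bound_of_continuousOn hzc.continuousOn
    exact ⟨max Cz 0, le_max_right _ _, fun s hs => (hCz s hs).trans (le_max_left _ _)⟩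
  have hgnorm : ∀ s, ‖gP s‖ ≤ L * (‖z s‖ + ‖z (β s)‖) ∧ ‖gM s‖ ≤ L * (‖z s‖ + ‖z (β s)‖) := by
    intro s
    have h := hlip s (z s) (z (β s)) 0 0
    rw [(hg0 s).1, (hg0 s).2, sub_zero, sub_zero, sub_zero, sub_zero] at h
    exact ⟨le_trans (le_add_of_nonneg_right (norm_nonneg _)) h,
      le_trans (le_add_of_nonneg_left (norm_nonneg _)) h⟩
  have hg_loc : ∀ a b : ℝ, ∃ R, ∀ s ∈ Icc a b, ‖gP s‖ ≤ R ∧ ‖gM s‖ ≤ R := by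
    intro a b
    obtain ⟨Cz, hCz0, hCz⟩ := hzbdd (a - θb) b
    refine ⟨L * (Cz + Cz), fun s hs => ?_⟩
    have h1 : ‖z s‖ ≤ Cz := hCz s ⟨by linarith [hs.1, hθb.le], hs.2⟩
    have h2 : ‖z (β s)‖ ≤ Cz := hCz (β s) ⟨by linarith [hβgt s, hs.1], (hβle s).trans hs.2⟩
    have hb : L * (‖z s‖ + ‖z (β s)‖) ≤ L * (Cz + Cz) :=
      mul_le_mul_of_nonneg_left (add_le_add h1 h2) hL.le
    exact ⟨(hgnorm s).1.trans hb, (hgnorm s).2.trans hb⟩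
  have hgP_loc : ∀ a b : ℝ, ∃ R, ∀ s ∈ Icc a b, ‖gP s‖ ≤ R := by
    intro a b; obtain ⟨R, hR⟩ := hg_loc a b; exact ⟨R, fun s hs => (hR s hs).1⟩
  have hgM_loc : ∀ a b : ℝ, ∃ R, ∀ s ∈ Icc a b, ‖gM s‖ ≤ R := by
    intro a b; obtain ⟨R, hR⟩ := hg_loc a b; exact ⟨R, fun s hs => (hR s hs).2⟩
  -- continuity and cocycle of transition operators
  have hUc2 : ∀ a : ℝ, Continuous fun s => U a s := fun a => trans_cont2 hUid hUderiv hμp hμ0 a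
  have hVc2 : ∀ a : ℝ, Continuous fun s => V a s := fun a => trans_cont2 hVid hVderiv hμm hμ0 a
  have hUco := trans_cocycle hUid hUderiv hμp hμ0
  have hVco := trans_cocycle hVid hVderiv hμm hμ0
  have hPint : ∀ c a b : ℝ, IntervalIntegrable (fun s => U c s (gP s)) volume a b :=
    fun c a b => intInt (hUc2 c) hgP_aesm hgP_loc a b
  have hMint : ∀ c a b : ℝ, IntervalIntegrable (fun s => V c s (gM s)) volume a b :=
    fun c a b => intInt (hVc2 c) hgM_aesm hgM_loc a b
  -- exponential decay bound for gM
  have hdec : ∃ C₁ : ℝ, 0 ≤ C₁ ∧ ∀ s, t₀ ≤ s → ‖gM s‖ ≤ C₁ * Real.exp (-α * (s - t₀)) := by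
    obtain ⟨Cz, hCz0, hCz⟩ := hzbdd (t₀ - θb) t₀
    have hmax0 : (0:ℝ) ≤ max N Cz := le_trans hCz0 (le_max_right _ _)
    refine ⟨L * (N + max N Cz * Real.exp (α * θb)), ?_, ?_⟩
    · exact mul_nonneg hL.le (add_nonneg hN.le (mul_nonneg hmax0 (Real.exp_pos _).le))
    · intro s hs
      have h1 : ‖z s‖ ≤ N * Real.exp (-α * (s - t₀)) := hdecay s hs
      have h2 : ‖z (β s)‖ ≤ max N Cz * Real.exp (α * θb) * Real.exp (-α * (s - t₀)) := by
        rcases le_or_gt t₀ (β s) with hb | hb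
        · have hd := hdecay (β s) hb
          have hβs : s - θb ≤ β s := hβgt s
          have hee : Real.exp (-α * (β s - t₀)) ≤
              Real.exp (α * θb) * Real.exp (-α * (s - t₀)) := by
            rw [← Real.exp_add]
            apply Real.exp_le_exp.2
            nlinarith [hα.le]
          calc ‖z (β s)‖ ≤ N * Real.exp (-α * (β s - t₀)) := hd
          _ ≤ N * (Real.exp (α * θb) * Real.exp (-α * (s - t₀))) :=
              mul_le_mul_of_nonneg_left hee hN.le
          _ ≤ max N Cz * Real.exp (α * θb) * Real.exp (-α * (s - t₀)) := by
              rw [mul_assoc]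
              exact mul_le_mul_of_nonneg_right (le_max_left _ _) (by positivity)
        · have hsb : s ≤ t₀ + θb := by linarith [hβgt s]
          have hz1 : ‖z (β s)‖ ≤ Cz := hCz (β s) ⟨by linarith [hβgt s], hb.le⟩
          have he1 : (1:ℝ) ≤ Real.exp (α * θb) * Real.exp (-α * (s - t₀)) := by
            rw [← Real.exp_add, ← Real.exp_zero]
            apply Real.exp_le_exp.2
            nlinarith [hα.le]
          calc ‖z (β s)‖ ≤ Cz := hz1
          _ ≤ max N Cz * 1 := by rw [mul_one]; exact le_max_right _ _
          _ ≤ max N Cz * (Real.exp (α * θb) * Real.exp (-α * (s - t₀))) :=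
              mul_le_mul_of_nonneg_left he1 hmax0
          _ = max N Cz * Real.exp (α * θb) * Real.exp (-α * (s - t₀)) := by ring
      calc ‖gM s‖ ≤ L * (‖z s‖ + ‖z (β s)‖) := (hgnorm s).2
      _ ≤ L * (N * Real.exp (-α * (s - t₀)) +
            max N Cz * Real.exp (α * θb) * Real.exp (-α * (s - t₀))) :=
          mul_le_mul_of_nonneg_left (add_le_add h1 h2) hL.le
      _ = (L * (N + max N Cz * Real.exp (α * θb))) * Real.exp (-α * (s - t₀)) := by ring
  obtain ⟨C₁, hC₁0, hC₁⟩ := hdec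
  -- integrability on Ioi t
  have hVptb : ∀ c s : ℝ, c ≤ s → t₀ ≤ s → ‖V c s (gM s)‖ ≤
      (K * C₁ * Real.exp (σ * c + α * t₀)) * Real.exp (-(σ + α) * s) := by
    intro c s hcs ht0s
    have h1 : ‖V c s‖ ≤ K * Real.exp (-σ * (s - c)) := hV s c hcs
    have h2 : ‖gM s‖ ≤ C₁ * Real.exp (-α * (s - t₀)) := hC₁ s ht0s
    calc ‖V c s (gM s)‖ ≤ ‖V c s‖ * ‖gM s‖ := (V c s).le_opNorm _
    _ ≤ (K * Real.exp (-σ * (s - c))) * (C₁ * Real.exp (-α * (s - t₀))) :=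
        mul_le_mul h1 h2 (norm_nonneg _) (by positivity)
    _ = (K * C₁ * Real.exp (σ * c + α * t₀)) * Real.exp (-(σ + α) * s) := by
        have e1 : K * Real.exp (-σ * (s - c)) * (C₁ * Real.exp (-α * (s - t₀)))
            = K * C₁ * Real.exp (-σ * (s - c) + -α * (s - t₀)) := by
          rw [Real.exp_add (-σ * (s - c)) (-α * (s - t₀))]; ring
        have e2 : K * C₁ * Real.exp (σ * c + α * t₀) * Real.exp (-(σ + α) * s)
            = K * C₁ * Real.exp (σ * c + α * t₀ + -(σ + α) * s) := by
          rw [Real.exp_add (σ * c + α * t₀) (-(σ + α) * s)]; ring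
        rw [e1, e2]
        exact congrArg (fun x : ℝ => K * C₁ * Real.exp x) (by ring)
  have hVIoi : ∀ c t : ℝ, IntegrableOn (fun s => V c s (gM s)) (Ioi t) volume := by
    intro c t
    have htR : t ≤ max (max t c) t₀ := le_trans (le_max_left _ _) (le_max_left _ _)
    have hIoc : IntegrableOn (fun s => V c s (gM s)) (Ioc t (max (max t c) t₀)) volume :=
      (intervalIntegrable_iff_integrableOn_Ioc_of_le htR).1 (hMint c t _)
    have hIoi2 : IntegrableOn (fun s => V c s (gM s)) (Ioi (max (max t c) t₀)) volume := by
      refine Integrable.mono'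
        (g := fun s => (K * C₁ * Real.exp (σ * c + α * t₀)) * Real.exp (-(σ + α) * s)) ?_
        ((clm_apply_aesm (hVc2 c) hgM_aesm).restrict) ?_
      · exact (exp_neg_integrableOn_Ioi _ (by linarith)).const_mul _
      · refine (ae_restrict_iff' measurableSet_Ioi).2 (Filter.Eventually.of_forall fun s hs => ?_)
        have hs' : max (max t c) t₀ < s := hs
        exact hVptb c s (le_trans (le_trans (le_max_right _ _) (le_max_left _ _)) hs'.le)
          (le_trans (le_max_right _ _) hs'.le)
    have hun : Ioc t (max (max t c) t₀) ∪ Ioi (max (max t c) t₀) = Ioi t :=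
      Ioc_union_Ioi_eq_Ioi htR
    rw [← hun]
    exact hIoc.union hIoi2
  -- RHS for u
  set RHSu : ℝ → Ek k := fun τ => U τ t₀ (z t₀).1 + ∫ s in t₀..τ, U τ s (gP s) with hRHSudef
  have hRu_eq : ∀ c τ : ℝ, RHSu τ = U τ c (U c t₀ (z t₀).1 + ∫ s in t₀..τ, U c s (gP s)) := by
    intro c τ
    rw [hRHSudef]
    simp only [map_add]
    congr 1
    · rw [← ContinuousLinearMap.comp_apply, ← hUco τ c t₀]
    · rw [← ContinuousLinearMap.intervalIntegral_comp_comm _ (hPint c t₀ τ)]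
      refine intervalIntegral.integral_congr fun s _ => ?_
      rw [← ContinuousLinearMap.comp_apply, ← hUco τ c s]
  have hRu_cont : Continuous RHSu := by
    have h1 : Continuous fun τ => (∫ s in t₀..τ, U t₀ s (gP s)) :=
      intervalIntegral.continuous_primitive (fun a b => hPint t₀ a b) t₀
    have h2 : Continuous fun τ => U τ t₀ (U t₀ t₀ (z t₀).1 + ∫ s in t₀..τ, U t₀ s (gP s)) :=
      (trans_cont1 hUderiv t₀).clm_apply (continuous_const.add h1)
    exact (funext (hRu_eq t₀) : RHSu = _) ▸ h2
  have hRu_deriv : ∀ t : ℝ, HasDerivWithinAt RHSu (Bp t (RHSu t) + gP t) (Ici t) t ∧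
      (t ∉ Set.range θ → HasDerivAt RHSu (Bp t (RHSu t) + gP t) t) := by
    intro t
    have hfun : RHSu = fun τ => U τ t (U t t₀ (z t₀).1 + ∫ s in t₀..τ, U t s (gP s)) :=
      funext (hRu_eq t)
    have haesm : AEStronglyMeasurable (fun s => U t s (gP s)) (volume : Measure ℝ) :=
      clm_apply_aesm (hUc2 t) hgP_aesm
    constructor
    · have hcw : ContinuousWithinAt (fun s => U t s (gP s)) (Ioi t) t :=
        isBoundedBilinearMap_apply.continuous.continuousAt.comp_continuousWithinAt
          (((hUc2 t).continuousWithinAt).prodMk ((hgP_right t).mono Ioi_subset_Ici_self))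
      have hftc : HasDerivWithinAt (fun τ => ∫ s in t₀..τ, U t s (gP s))
          (U t t (gP t)) (Ici t) t :=
        intervalIntegral.integral_hasDerivWithinAt_right (hPint t t₀ t)
          ⟨univ, univ_mem, haesm.restrict⟩ hcw
      have hc : HasDerivWithinAt (fun τ => U τ t) ((Bp t).comp (U t t)) (Ici t) t :=
        (hUderiv t t).hasDerivWithinAt
      have hu := hftc.const_add (U t t₀ (z t₀).1)
      have hres := hc.clm_apply hu
      rw [hfun]
      refine hres.congr_deriv (Eq.symm ?_)
      rw [show (fun τ => U τ t (U t t₀ (z t₀).1 + ∫ s in t₀..τ, U t s (gP s))) t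
          = U t t (U t t₀ (z t₀).1 + ∫ s in t₀..t, U t s (gP s)) from rfl]
      simp [hUid t]
    · intro htθ
      have hca : ContinuousAt (fun s => U t s (gP s)) t :=
        isBoundedBilinearMap_apply.continuous.continuousAt.comp
          (((hUc2 t).continuousAt).prodMk (hgP_at t htθ))
      have hftc : HasDerivAt (fun τ => ∫ s in t₀..τ, U t s (gP s)) (U t t (gP t)) t :=
        intervalIntegral.integral_hasDerivAt_right (hPint t t₀ t)
          ⟨univ, univ_mem, haesm.restrict⟩ hca
      have hu := hftc.const_add (U t t₀ (z t₀).1)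
      have hres := (hUderiv t t).clm_apply hu
      rw [hfun]
      refine hres.congr_deriv (Eq.symm ?_)
      simp [hUid t]
  -- RHS for v
  set RHSv : ℝ → Ek m := fun τ => -∫ s in Ioi τ, V τ s (gM s) with hRHSvdef
  have hsplit : ∀ c a b : ℝ, (∫ s in Ioi b, V c s (gM s)) =
      (∫ s in Ioi a, V c s (gM s)) - ∫ s in a..b, V c s (gM s) := by
    have key : ∀ c x y : ℝ, x ≤ y → (∫ s in Ioi x, V c s (gM s)) =
        (∫ s in x..y, V c s (gM s)) + ∫ s in Ioi y, V c s (gM s) := by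
      intro c x y hxy
      rw [intervalIntegral.integral_of_le hxy,
        ← MeasureTheory.setIntegral_union (Ioc_disjoint_Ioi le_rfl) measurableSet_Ioi
          ((hVIoi c x).mono_set Ioc_subset_Ioi_self) (hVIoi c y),
        Ioc_union_Ioi_eq_Ioi hxy]
    intro c a b
    rcases le_total a b with hab | hab
    · rw [key c a b hab]; abel
    · rw [key c b a hab, intervalIntegral.integral_symm b a]; abel
  have hRv_eq : ∀ c τ : ℝ, RHSv τ =
      -(V τ c ((∫ s in Ioi c, V c s (gM s)) - ∫ s in c..τ, V c s (gM s))) := by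
    intro c τ
    show -∫ s in Ioi τ, V τ s (gM s) = _
    rw [← hsplit c c τ]
    congr 1
    rw [← ContinuousLinearMap.integral_comp_comm _ (hVIoi c τ)]
    refine MeasureTheory.setIntegral_congr_fun measurableSet_Ioi (fun s _ => ?_)
    rw [← ContinuousLinearMap.comp_apply, ← hVco τ c s]
  have hRv_cont : Continuous RHSv := by
    have h1 : Continuous fun τ => (∫ s in t₀..τ, V t₀ s (gM s)) :=
      intervalIntegral.continuous_primitive (fun a b => hMint t₀ a b) t₀
    have h2 : Continuous fun τ =>
        -(V τ t₀ ((∫ s in Ioi t₀, V t₀ s (gM s)) - ∫ s in t₀..τ, V t₀ s (gM s))) :=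
      ((trans_cont1 hVderiv t₀).clm_apply (continuous_const.sub h1)).neg
    exact (funext (hRv_eq t₀) : RHSv = _) ▸ h2
  have hRv_deriv : ∀ t : ℝ, HasDerivWithinAt RHSv (Bm t (RHSv t) + gM t) (Ici t) t ∧
      (t ∉ Set.range θ → HasDerivAt RHSv (Bm t (RHSv t) + gM t) t) := by
    intro t
    have hfun : RHSv = fun τ =>
        -(V τ t ((∫ s in Ioi t, V t s (gM s)) - ∫ s in t..τ, V t s (gM s))) :=
      funext (hRv_eq t)
    have haesm : AEStronglyMeasurable (fun s => V t s (gM s)) (volume : Measure ℝ) :=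
      clm_apply_aesm (hVc2 t) hgM_aesm
    constructor
    · have hcw : ContinuousWithinAt (fun s => V t s (gM s)) (Ioi t) t :=
        isBoundedBilinearMap_apply.continuous.continuousAt.comp_continuousWithinAt
          (((hVc2 t).continuousWithinAt).prodMk ((hgM_right t).mono Ioi_subset_Ici_self))
      have hftc : HasDerivWithinAt (fun τ => ∫ s in t..τ, V t s (gM s))
          (V t t (gM t)) (Ici t) t :=
        intervalIntegral.integral_hasDerivWithinAt_right (hMint t t t)
          ⟨univ, univ_mem, haesm.restrict⟩ hcw
      have hu := hftc.const_sub (∫ s in Ioi t, V t s (gM s))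
      have hres := (((hVderiv t t).hasDerivWithinAt).clm_apply hu).neg
      rw [hfun]
      refine hres.congr_deriv (Eq.symm ?_)
      simp [hVid t, intervalIntegral.integral_same]
      abel
    · intro htθ
      have hca : ContinuousAt (fun s => V t s (gM s)) t :=
        isBoundedBilinearMap_apply.continuous.continuousAt.comp
          (((hVc2 t).continuousAt).prodMk (hgM_at t htθ))
      have hftc : HasDerivAt (fun τ => ∫ s in t..τ, V t s (gM s)) (V t t (gM t)) t :=
        intervalIntegral.integral_hasDerivAt_right (hMint t t t)
          ⟨univ, univ_mem, haesm.restrict⟩ hca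
      have hu := hftc.const_sub (∫ s in Ioi t, V t s (gM s))
      have hres := ((hVderiv t t).clm_apply hu).neg
      rw [hfun]
      refine hres.congr_deriv (Eq.symm ?_)
      simp [hVid t, intervalIntegral.integral_same]
      abel
  -- norm bound for RHSv
  have hRvb : ∀ s : ℝ, t₀ ≤ s →
      ‖RHSv s‖ ≤ (K * C₁ * (σ + α)⁻¹) * Real.exp (-α * (s - t₀)) := by
    intro s hs
    have hb : ∀ r ∈ Ioi s, ‖V s r (gM r)‖ ≤
        (K * C₁ * Real.exp (-α * (s - t₀))) * Real.exp (-(σ + α) * (r - s)) := by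
      intro r hr
      have h1 : ‖V s r‖ ≤ K * Real.exp (-σ * (r - s)) := hV r s (le_of_lt hr)
      have h2 : ‖gM r‖ ≤ C₁ * Real.exp (-α * (r - t₀)) := hC₁ r (hs.trans (le_of_lt hr))
      calc ‖V s r (gM r)‖ ≤ ‖V s r‖ * ‖gM r‖ := (V s r).le_opNorm _
      _ ≤ (K * Real.exp (-σ * (r - s))) * (C₁ * Real.exp (-α * (r - t₀))) :=
          mul_le_mul h1 h2 (norm_nonneg _) (by positivity)
      _ = (K * C₁ * Real.exp (-α * (s - t₀))) * Real.exp (-(σ + α) * (r - s)) := by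
          have e1 : K * Real.exp (-σ * (r - s)) * (C₁ * Real.exp (-α * (r - t₀)))
              = K * C₁ * Real.exp (-σ * (r - s) + -α * (r - t₀)) := by
            rw [Real.exp_add (-σ * (r - s)) (-α * (r - t₀))]; ring
          have e2 : K * C₁ * Real.exp (-α * (s - t₀)) * Real.exp (-(σ + α) * (r - s))
              = K * C₁ * Real.exp (-α * (s - t₀) + -(σ + α) * (r - s)) := by
            rw [Real.exp_add (-α * (s - t₀)) (-(σ + α) * (r - s))]; ring
          rw [e1, e2]
          exact congrArg (fun x : ℝ => K * C₁ * Real.exp x) (by ring)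
    have hmaj : IntegrableOn (fun r =>
        (K * C₁ * Real.exp (-α * (s - t₀))) * Real.exp (-(σ + α) * (r - s))) (Ioi s) volume :=
      (exp_shift_integrable (by linarith) s).const_mul _
    have hnn : ‖RHSv s‖ = ‖∫ r in Ioi s, V s r (gM r)‖ := by
      show ‖-∫ r in Ioi s, V s r (gM r)‖ = _
      rw [norm_neg]
    rw [hnn]
    calc ‖∫ r in Ioi s, V s r (gM r)‖ ≤ ∫ r in Ioi s, ‖V s r (gM r)‖ :=
        norm_integral_le_integral_norm _
    _ ≤ ∫ r in Ioi s, (K * C₁ * Real.exp (-α * (s - t₀))) * Real.exp (-(σ + α) * (r - s)) :=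
        setIntegral_mono_on ((hVIoi s s).norm) hmaj measurableSet_Ioi hb
    _ = (K * C₁ * Real.exp (-α * (s - t₀))) * ∫ r in Ioi s, Real.exp (-(σ + α) * (r - s)) := by
        rw [MeasureTheory.integral_const_mul]
    _ = (K * C₁ * (σ + α)⁻¹) * Real.exp (-α * (s - t₀)) := by
        rw [exp_shift_integral (by linarith : (0:ℝ) < σ + α) s]; ring
  -- the equivalence
  constructor
  · rintro ⟨hzcont, hsol⟩
    have hsolu : ∀ t : ℝ, HasDerivWithinAt (fun s => (z s).1) (Bp t (z t).1 + gP t) (Ici t) t := by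
      intro t
      have := ((hsol t (Set.mem_univ t)).1).1
      simpa [Set.inter_univ] using this
    have hsolv : ∀ t : ℝ, HasDerivWithinAt (fun s => (z s).2) (Bm t (z t).2 + gM t) (Ici t) t := by
      intro t
      have := ((hsol t (Set.mem_univ t)).1).2
      simpa [Set.inter_univ] using this
    have hsolu' : ∀ t ∉ Set.range θ, HasDerivAt (fun s => (z s).1) (Bp t (z t).1 + gP t) t := by
      intro t ht
      have := ((hsol t (Set.mem_univ t)).2 ht).1
      rwa [hasDerivWithinAt_univ] at this
    have hsolv' : ∀ t ∉ Set.range θ, HasDerivAt (fun s => (z s).2) (Bm t (z t).2 + gM t) t := by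
      intro t ht
      have := ((hsol t (Set.mem_univ t)).2 ht).2
      rwa [hasDerivWithinAt_univ] at this
    have hwu : ∀ t : ℝ, (z t).1 = RHSu t := by
      have hw0 : (z t₀).1 - RHSu t₀ = 0 := by
        show (z t₀).1 - (U t₀ t₀ (z t₀).1 + ∫ s in t₀..t₀, U t₀ s (gP s)) = 0
        simp [hUid t₀, intervalIntegral.integral_same]
      have hwc : Continuous fun τ => (z τ).1 - RHSu τ := (continuous_fst.comp hzc).sub hRu_cont
      have hwd_r : ∀ t : ℝ, HasDerivWithinAt (fun τ => (z τ).1 - RHSu τ)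
          (Bp t ((z t).1 - RHSu t)) (Ici t) t := by
        intro t
        have h := (hsolu t).sub (hRu_deriv t).1
        refine h.congr_deriv (Eq.symm ?_)
        simp only [map_sub]
        abel
      have hwd_a : ∀ t ∉ Set.range θ, HasDerivAt (fun τ => (z τ).1 - RHSu τ)
          (Bp t ((z t).1 - RHSu t)) t := by
        intro t ht
        have h := (hsolu' t ht).sub ((hRu_deriv t).2 ht)
        refine h.congr_deriv (Eq.symm ?_)
        simp only [map_sub]
        abel
      have hbd : ∀ t : ℝ, ‖Bp t ((z t).1 - RHSu t)‖ ≤ μ * ‖(z t).1 - RHSu t‖ := fun t =>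
        le_trans ((Bp t).le_opNorm _) (mul_le_mul_of_nonneg_right (hμp t) (norm_nonneg _))
      intro t
      have hzero : ‖(z t).1 - RHSu t‖ ≤ 0 := by
        rcases le_total t₀ t with hcmp | hcmp
        · have := gron_right (f := fun τ => (z τ).1 - RHSu τ)
            (f' := fun τ => Bp τ ((z τ).1 - RHSu τ)) hwc.continuousOn
            (fun x _ => hwd_r x) (fun x _ => hbd x) hcmp
          simpa [hw0] using this
        · have := back_unique hθmono hgr hμ0 hwc hwd_a hbd t t₀ hcmp
          simpa [hw0] using this
      exact sub_eq_zero.1 (norm_le_zero_iff.1 hzero)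
    have hwv : ∀ t : ℝ, (z t).2 = RHSv t := by
      have hwc : Continuous fun τ => (z τ).2 - RHSv τ := (continuous_snd.comp hzc).sub hRv_cont
      have hwd_a : ∀ t ∉ Set.range θ, HasDerivAt (fun τ => (z τ).2 - RHSv τ)
          (Bm t ((z t).2 - RHSv t)) t := by
        intro t ht
        have h := (hsolv' t ht).sub ((hRv_deriv t).2 ht)
        refine h.congr_deriv (Eq.symm ?_)
        simp only [map_sub]
        abel
      have hbd : ∀ t : ℝ, ‖Bm t ((z t).2 - RHSv t)‖ ≤ μ * ‖(z t).2 - RHSv t‖ := fun t =>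
        le_trans ((Bm t).le_opNorm _) (mul_le_mul_of_nonneg_right (hμm t) (norm_nonneg _))
      have hkey : ∀ t s : ℝ, t ≤ s →
          (z t).2 - RHSv t = V t s ((z s).2 - RHSv s) := by
        intro t s hts
        have hδc : Continuous fun τ => ((z τ).2 - RHSv τ) - V τ s ((z s).2 - RHSv s) :=
          hwc.sub ((trans_cont1 hVderiv s).clm_apply continuous_const)
        have hδd : ∀ τ ∉ Set.range θ,
            HasDerivAt (fun τ => ((z τ).2 - RHSv τ) - V τ s ((z s).2 - RHSv s))
              (Bm τ (((z τ).2 - RHSv τ) - V τ s ((z s).2 - RHSv s))) τ := by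
          intro τ hτ
          have h2 : HasDerivAt (fun r => V r s ((z s).2 - RHSv s))
              (((Bm τ).comp (V τ s)) ((z s).2 - RHSv s) + (V τ s) 0) τ :=
            (hVderiv s τ).clm_apply (hasDerivAt_const τ ((z s).2 - RHSv s))
          have h := (hwd_a τ hτ).sub h2
          refine h.congr_deriv (Eq.symm ?_)
          simp only [map_sub, map_zero, add_zero, ContinuousLinearMap.comp_apply]
        have hδbd : ∀ τ : ℝ, ‖Bm τ (((z τ).2 - RHSv τ) - V τ s ((z s).2 - RHSv s))‖ ≤
            μ * ‖((z τ).2 - RHSv τ) - V τ s ((z s).2 - RHSv s)‖ := fun τ =>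
          le_trans ((Bm τ).le_opNorm _) (mul_le_mul_of_nonneg_right (hμm τ) (norm_nonneg _))
        have hδ0 : ((z s).2 - RHSv s) - V s s ((z s).2 - RHSv s) = 0 := by
          simp [hVid s]
        have hle := back_unique hθmono hgr hμ0 hδc hδd hδbd t s hts
        rw [hδ0] at hle
        simp only [norm_zero, zero_mul] at hle
        exact sub_eq_zero.1 (norm_le_zero_iff.1 hle)
      have hwdecay : ∀ s : ℝ, t₀ ≤ s → ‖(z s).2 - RHSv s‖ ≤
          (N + K * C₁ * (σ + α)⁻¹) * Real.exp (-α * (s - t₀)) := by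
        intro s hs
        have h1 : ‖(z s).2‖ ≤ N * Real.exp (-α * (s - t₀)) :=
          le_trans (norm_snd_le (z s)) (hdecay s hs)
        have h2 := hRvb s hs
        calc ‖(z s).2 - RHSv s‖ ≤ ‖(z s).2‖ + ‖RHSv s‖ := norm_sub_le _ _
        _ ≤ N * Real.exp (-α * (s - t₀)) + (K * C₁ * (σ + α)⁻¹) * Real.exp (-α * (s - t₀)) :=
            add_le_add h1 h2
        _ = (N + K * C₁ * (σ + α)⁻¹) * Real.exp (-α * (s - t₀)) := by ring
      intro t
      have hlim : Tendsto (fun s : ℝ => (K * Real.exp (-σ * (s - t))) *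
          ((N + K * C₁ * (σ + α)⁻¹) * Real.exp (-α * (s - t₀)))) atTop (𝓝 0) := by
        have heq : ∀ s : ℝ, (K * (N + K * C₁ * (σ + α)⁻¹)) *
            Real.exp (-(σ + α) * s + (σ * t + α * t₀))
            = (K * Real.exp (-σ * (s - t))) *
              ((N + K * C₁ * (σ + α)⁻¹) * Real.exp (-α * (s - t₀))) := by
          intro s
          rw [show -(σ + α) * s + (σ * t + α * t₀) = -σ * (s - t) + -α * (s - t₀) by ring,
            Real.exp_add]
          ring
        have h0 : Tendsto (fun s : ℝ => Real.exp (-(σ + α) * s + (σ * t + α * t₀)))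
            atTop (𝓝 0) := by
          apply Real.tendsto_exp_atBot.comp
          apply Filter.tendsto_atBot_add_const_right
          exact Tendsto.const_mul_atTop_of_neg (by linarith) tendsto_id
        have h1 := h0.const_mul (K * (N + K * C₁ * (σ + α)⁻¹))
        rw [mul_zero] at h1
        exact h1.congr heq
      have hbound : ∀ᶠ s in atTop, ‖(z t).2 - RHSv t‖ ≤ (K * Real.exp (-σ * (s - t))) *
          ((N + K * C₁ * (σ + α)⁻¹) * Real.exp (-α * (s - t₀))) := by
        filter_upwards [eventually_ge_atTop (max t t₀)] with s hs
        have hts : t ≤ s := le_trans (le_max_left _ _) hs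
        have ht0s : t₀ ≤ s := le_trans (le_max_right _ _) hs
        rw [hkey t s hts]
        calc ‖V t s ((z s).2 - RHSv s)‖ ≤ ‖V t s‖ * ‖(z s).2 - RHSv s‖ := (V t s).le_opNorm _
        _ ≤ (K * Real.exp (-σ * (s - t))) *
            ((N + K * C₁ * (σ + α)⁻¹) * Real.exp (-α * (s - t₀))) :=
          mul_le_mul (hV s t hts) (hwdecay s ht0s) (norm_nonneg _) (by positivity)
      have hfin : ‖(z t).2 - RHSv t‖ ≤ 0 := ge_of_tendsto hlim hbound
      exact sub_eq_zero.1 (norm_le_zero_iff.1 hfin)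
    intro t
    exact ⟨hwu t, hVIoi t t, hwv t⟩
  · intro h
    refine ⟨hzc.continuousOn, fun t _ => ?_⟩
    have hz1 : ∀ τ, (z τ).1 = RHSu τ := fun τ => (h τ).1
    have hz2 : ∀ τ, (z τ).2 = RHSv τ := fun τ => (h τ).2.2
    constructor
    · constructor
      · rw [Set.inter_univ]
        have hh := (hRu_deriv t).1
        rw [← hz1 t] at hh
        exact hh.congr (fun s _ => hz1 s) (hz1 t)
      · rw [Set.inter_univ]
        have hh := (hRv_deriv t).1
        rw [← hz2 t] at hh
        exact hh.congr (fun s _ => hz2 s) (hz2 t)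
    · intro ht
      constructor
      · rw [hasDerivWithinAt_univ]
        have hh := (hRu_deriv t).2 ht
        rw [← hz1 t] at hh
        exact hh.congr_of_eventuallyEq (Filter.Eventually.of_forall hz1)
      · rw [hasDerivWithinAt_univ]
        have hh := (hRv_deriv t).2 ht
        rw [← hz2 t] at hh
        exact hh.congr_of_eventuallyEq (Filter.Eventually.of_forall hz2)
end
end

section
/- Assume the box-diagonal EPCAG setting and condition (bw). Fix N > 0, α ∈ (0,σ) and t₀ ∈ ℝ, and let z = (u,v) : ℝ → ℝᵏ × ℝ^{n−k} be a continuous function with ‖z(t)‖ ≤ N·exp(α(t−t₀)) for all t ≤ t₀. Then z is a solution of system (3*) on ℝ if and only if for every t ∈ ℝ: u(t) = ∫_{−∞}^{t} U(t,s)·g₊(s, z(s), z(β(s))) ds (the improper integral converging) and v(t) = V(t,t₀)v(t₀) + ∫_{t₀}^{t} V(t,s)·g₋(s, z(s), z(β(s))) ds. -/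
/-!
Both directions rest on the variation-of-constants formula
`x t = U t a (x a) + ∫ s in a..t, U t s (G s)` for a continuous `x` with right derivative
`B s (x s) + G s`, applied to each component with the forcing `G s = g s (z s) (z (β s))`.
Since `β` is constant on each `[θ i, θ (i + 1))`, this forcing is right-continuous everywhere
and continuous off the `θ i`, so conversely the integral representation can be differentiated
by the fundamental theorem of calculus. For the stable component, `‖U t a (u a)‖` is
`O(exp ((σ + α) a))`, so letting `a → -∞` turns the formula into the improper integral.
-/

open Set Real Filter MeasureTheory

noncomputable section

open Topology

section ClmApply

variable {E F : Type*} [NormedAddCommGroup E] [NormedSpace ℝ E]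
  [NormedAddCommGroup F] [NormedSpace ℝ F]

theorem stronglyMeasurable_clm_apply {w : ℝ → E →L[ℝ] F} {G : ℝ → E} (hw : Continuous w)
    (hG : StronglyMeasurable G) : StronglyMeasurable fun s => w s (G s) :=
  isBoundedBilinearMap_apply.continuous.comp_stronglyMeasurable (hw.stronglyMeasurable.prodMk hG)

theorem intervalIntegrable_clm_apply {w : ℝ → E →L[ℝ] F} {G : ℝ → E} (hw : Continuous w)
    (hGm : StronglyMeasurable G) (hGb : ∀ a b, ∃ C, ∀ s ∈ Icc a b, ‖G s‖ ≤ C) (a b : ℝ) :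
    IntervalIntegrable (fun s => w s (G s)) volume a b := by
  obtain ⟨C, hC⟩ := hGb (min a b) (max a b)
  obtain ⟨D, hD⟩ := (isCompact_uIcc (a := a) (b := b)).exists_bound_of_continuousOn hw.continuousOn
  rw [intervalIntegrable_iff]
  refine Integrable.mono' (g := fun _ => D * C) (integrableOn_const measure_Ioc_lt_top.ne)
    (stronglyMeasurable_clm_apply hw hGm).aestronglyMeasurable.restrict ?_
  filter_upwards [ae_restrict_mem measurableSet_uIoc] with s hs
  have hs' : s ∈ uIcc a b := uIoc_subset_uIcc hs
  calc ‖w s (G s)‖ ≤ ‖w s‖ * ‖G s‖ := (w s).le_opNorm _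
    _ ≤ D * C := mul_le_mul (hD s hs') (hC s hs') (norm_nonneg _) ((norm_nonneg _).trans (hD s hs'))

theorem norm_apply_le_exp {A : E →L[ℝ] F} {y : E} {K σ N α t s t₀ : ℝ}
    (hA : ‖A‖ ≤ K * exp (-σ * (t - s))) (hy : ‖y‖ ≤ N * exp (α * (s - t₀))) :
    ‖A y‖ ≤ K * N * exp (-σ * t - α * t₀) * exp ((σ + α) * s) := by
  calc ‖A y‖ ≤ ‖A‖ * ‖y‖ := A.le_opNorm y
    _ ≤ K * exp (-σ * (t - s)) * (N * exp (α * (s - t₀))) :=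
      mul_le_mul hA hy (norm_nonneg _) ((norm_nonneg _).trans hA)
    _ = K * N * exp (-σ * t - α * t₀) * exp ((σ + α) * s) := by
      rw [mul_mul_mul_comm, mul_assoc (K * N), ← exp_add, ← exp_add]
      ring_nf

theorem tendsto_apply_atBot {U : ℝ → ℝ → E →L[ℝ] F} {K σ N α t₀ : ℝ}
    (hUdecay : ∀ s t, s ≤ t → ‖U t s‖ ≤ K * exp (-σ * (t - s))) (hσα : 0 < σ + α) {x : ℝ → E}
    (hxdecay : ∀ s ≤ t₀, ‖x s‖ ≤ N * exp (α * (s - t₀))) (t : ℝ) :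
    Tendsto (fun a => U t a (x a)) atBot (𝓝 0) := by
  have hexp : Tendsto (fun a => K * N * exp (-σ * t - α * t₀) * exp ((σ + α) * a)) atBot (𝓝 0) := by
    simpa using (tendsto_exp_atBot.comp (tendsto_id.const_mul_atBot hσα)).const_mul
      (K * N * exp (-σ * t - α * t₀))
  refine squeeze_zero_norm' ?_ hexp
  filter_upwards [eventually_le_atBot (min t t₀)] with a ha
  exact norm_apply_le_exp (hUdecay a t (ha.trans (min_le_left _ _)))
    (hxdecay a (ha.trans (min_le_right _ _)))

end ClmApply

section TransitionOperator

variable {E : Type*} [NormedAddCommGroup E] [NormedSpace ℝ E]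
  {B : ℝ → E →L[ℝ] E} {U : ℝ → ℝ → E →L[ℝ] E} {μ : ℝ}

structure IsTransitionOperator (B : ℝ → E →L[ℝ] E) (U : ℝ → ℝ → E →L[ℝ] E) : Prop where
  self_eq_id : ∀ s, U s s = ContinuousLinearMap.id ℝ E
  hasDerivAt_fst : ∀ s t, HasDerivAt (fun r => U r s) ((B t).comp (U t s)) t

namespace IsTransitionOperator

theorem comp_eq (hU : IsTransitionOperator B U) (hB : ∀ t, ‖B t‖ ≤ μ) (t r s : ℝ) :
    (U t r).comp (U r s) = U t s := by
  -- both sides solve `X' = B t ∘ X` and agree at `t = r`; the bound on `B` makes this Lipschitz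
  have hμ : 0 ≤ μ := (norm_nonneg _).trans (hB 0)
  have hlip : ∀ t, LipschitzWith ⟨μ, hμ⟩ fun X : E →L[ℝ] E => (B t).comp X := fun t =>
    LipschitzWith.of_dist_le_mul fun X Y => by
      rw [dist_eq_norm, dist_eq_norm, ← ContinuousLinearMap.comp_sub]
      exact ((B t).opNorm_comp_le _).trans (mul_le_mul_of_nonneg_right (hB t) (norm_nonneg _))
  have hcomp : ∀ t, HasDerivAt (fun t => (U t r).comp (U r s))
      ((B t).comp ((U t r).comp (U r s))) t := fun t => by
    simpa [ContinuousLinearMap.comp_assoc] using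
      (hU.hasDerivAt_fst r t).clm_comp (hasDerivAt_const t (U r s))
  have hsol := ODE_solution_unique_univ (s := fun _ => univ) (t₀ := r)
    (fun t => (hlip t).lipschitzOnWith) (fun t => ⟨hcomp t, trivial⟩)
    (fun t => ⟨hU.hasDerivAt_fst s t, trivial⟩)
    (by rw [hU.self_eq_id, ContinuousLinearMap.id_comp])
  exact congrFun hsol t

theorem apply_apply (hU : IsTransitionOperator B U) (hB : ∀ t, ‖B t‖ ≤ μ) (t r s : ℝ) (x : E) :
    U t r (U r s x) = U t s x := by
  rw [← hU.comp_eq hB t r s, ContinuousLinearMap.comp_apply]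

theorem mul_eq_one (hU : IsTransitionOperator B U) (hB : ∀ t, ‖B t‖ ≤ μ) (t s : ℝ) :
    U t s * U s t = 1 := by
  rw [ContinuousLinearMap.mul_def, hU.comp_eq hB, hU.self_eq_id, ContinuousLinearMap.one_def]

variable [CompleteSpace E]

theorem hasDerivAt_snd (hU : IsTransitionOperator B U) (hB : ∀ t, ‖B t‖ ≤ μ) (t s : ℝ) :
    HasDerivAt (fun s => U t s) (-(U t s).comp (B s)) s := by
  -- `U t s` is the inverse of `U s t`, so this is the derivative of `Ring.inverse`
  let W : ℝ → (E →L[ℝ] E)ˣ := fun r => ⟨U r t, U t r, hU.mul_eq_one hB r t, hU.mul_eq_one hB t r⟩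
  have hinv := (hasFDerivAt_ringInverse (𝕜 := ℝ) (W s)).comp_hasDerivAt s (hU.hasDerivAt_fst t s)
  refine (hinv.congr_of_eventuallyEq
    (.of_forall fun r => (Ring.inverse_unit (W r)).symm)).congr_deriv ?_
  change -(U t s * (B s * U s t) * U t s) = -(U t s * B s)
  rw [mul_assoc (U t s), mul_assoc (B s), hU.mul_eq_one hB s t, mul_one]

theorem continuous_snd (hU : IsTransitionOperator B U) (hB : ∀ t, ‖B t‖ ≤ μ) (t : ℝ) :
    Continuous fun s => U t s :=
  continuous_iff_continuousAt.2 fun s => (hU.hasDerivAt_snd hB t s).continuousAt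

theorem stronglyMeasurable_apply (hU : IsTransitionOperator B U) (hB : ∀ t, ‖B t‖ ≤ μ)
    {G : ℝ → E} (hGm : StronglyMeasurable G) (t : ℝ) :
    StronglyMeasurable fun s => U t s (G s) :=
  stronglyMeasurable_clm_apply (hU.continuous_snd hB t) hGm

theorem intervalIntegrable_apply (hU : IsTransitionOperator B U) (hB : ∀ t, ‖B t‖ ≤ μ)
    {G : ℝ → E} (hGm : StronglyMeasurable G) (hGb : ∀ a b, ∃ C, ∀ s ∈ Icc a b, ‖G s‖ ≤ C)
    (t a b : ℝ) : IntervalIntegrable (fun s => U t s (G s)) volume a b :=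
  intervalIntegrable_clm_apply (hU.continuous_snd hB t) hGm hGb a b

theorem eq_apply_add_integral (hU : IsTransitionOperator B U) (hB : ∀ t, ‖B t‖ ≤ μ)
    {x G : ℝ → E} (hx : Continuous x) (hGm : StronglyMeasurable G)
    (hGb : ∀ a b, ∃ C, ∀ s ∈ Icc a b, ‖G s‖ ≤ C)
    (hx' : ∀ s, HasDerivWithinAt x (B s (x s) + G s) (Ici s) s) (a t : ℝ) :
    x t = U t a (x a) + ∫ s in a..t, U t s (G s) := by
  have hφ' : ∀ s, HasDerivWithinAt (fun r => U t r (x r)) (U t s (G s)) (Ici s) s := fun s => by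
    convert (hU.hasDerivAt_snd hB t s).hasDerivWithinAt.clm_apply (hx' s) using 1
    simp only [neg_apply, ContinuousLinearMap.comp_apply, map_add]
    abel
  have hφc : Continuous fun r => U t r (x r) := (hU.continuous_snd hB t).clm_apply hx
  rw [intervalIntegral.integral_eq_sub_of_hasDeriv_right hφc.continuousOn
    (fun s _ => (hφ' s).mono Ioi_subset_Ici_self) (hU.intervalIntegrable_apply hB hGm hGb t a t),
    hU.self_eq_id, ContinuousLinearMap.id_apply, add_sub_cancel]

theorem apply_add_integral_eq (hU : IsTransitionOperator B U) (hB : ∀ t, ‖B t‖ ≤ μ)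
    {G : ℝ → E} (hGm : StronglyMeasurable G) (hGb : ∀ a b, ∃ C, ∀ s ∈ Icc a b, ‖G s‖ ≤ C)
    (y : E) (a t : ℝ) :
    U t a y + ∫ s in a..t, U t s (G s) = U t a (y + ∫ s in a..t, U a s (G s)) := by
  rw [map_add, ← (U t a).intervalIntegral_comp_comm (hU.intervalIntegrable_apply hB hGm hGb a a t)]
  simp only [hU.apply_apply hB]

theorem integral_Iio_eq_apply_add_integral (hU : IsTransitionOperator B U)
    (hB : ∀ t, ‖B t‖ ≤ μ) {G : ℝ → E}
    (hint : ∀ t, IntegrableOn (fun s => U t s (G s)) (Iio t)) (a t : ℝ) :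
    ∫ s in Iio t, U t s (G s) = U t a ((∫ s in Iio a, U a s (G s)) + ∫ s in a..t, U a s (G s)) := by
  have hint' : ∀ r, IntegrableOn (fun s => U a s (G s)) (Iic r) := fun r => by
    have h := (U a r).integrable_comp (hint r)
    simp only [hU.apply_apply hB] at h
    exact (integrableOn_Iic_iff_integrableOn_Iio).2 h
  rw [← intervalIntegral.integral_Iic_sub_Iic (hint' a) (hint' t), integral_Iic_eq_integral_Iio,
    integral_Iic_eq_integral_Iio, add_sub_cancel,
    ← (U t a).integral_comp_comm ((integrableOn_Iic_iff_integrableOn_Iio).1 (hint' t))]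
  simp only [hU.apply_apply hB]

theorem hasDerivWithinAt_of_eq_apply_add_integral (hU : IsTransitionOperator B U)
    (hB : ∀ t, ‖B t‖ ≤ μ) {x G : ℝ → E} (hGm : StronglyMeasurable G)
    (hGb : ∀ a b, ∃ C, ∀ s ∈ Icc a b, ‖G s‖ ≤ C) {a : ℝ} {c : E}
    (hx : ∀ t, x t = U t a (c + ∫ s in a..t, U a s (G s))) {S S' : Set ℝ} {b : ℝ}
    [intervalIntegral.FTCFilter b (𝓝[S] b) (𝓝[S'] b)] (hGc : ContinuousWithinAt G S' b) :
    HasDerivWithinAt x (B b (x b) + G b) S b := by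
  have hI : HasDerivWithinAt (fun r => ∫ s in a..r, U a s (G s)) (U a b (G b)) S b :=
    intervalIntegral.integral_hasDerivWithinAt_right (hU.intervalIntegrable_apply hB hGm hGb a a b)
      (hU.stronglyMeasurable_apply hB hGm a).stronglyMeasurableAtFilter
      ((hU.continuous_snd hB a).continuousWithinAt.clm_apply hGc)
  refine (((hU.hasDerivAt_fst a b).hasDerivWithinAt.clm_apply (hI.const_add c)).congr
    (fun t _ => hx t) (hx b)).congr_deriv ?_
  rw [hx b, ContinuousLinearMap.comp_apply, hU.apply_apply hB, hU.self_eq_id,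
    ContinuousLinearMap.id_apply]

theorem integrableOn_Iio_apply (hU : IsTransitionOperator B U) (hB : ∀ t, ‖B t‖ ≤ μ)
    {K σ M α t₀ : ℝ} (hUdecay : ∀ s t, s ≤ t → ‖U t s‖ ≤ K * exp (-σ * (t - s)))
    (hσα : 0 < σ + α) {G : ℝ → E} (hGm : StronglyMeasurable G)
    (hGb : ∀ a b, ∃ C, ∀ s ∈ Icc a b, ‖G s‖ ≤ C)
    (hGdecay : ∀ s ≤ t₀, ‖G s‖ ≤ M * exp (α * (s - t₀))) (t : ℝ) :
    IntegrableOn (fun s => U t s (G s)) (Iio t) := by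
  have hIic : IntegrableOn (fun s => U t s (G s)) (Iic (min t t₀)) := by
    refine ((integrableOn_exp_mul_Iic hσα (min t t₀)).const_mul
      (K * M * exp (-σ * t - α * t₀))).mono'
      (hU.stronglyMeasurable_apply hB hGm t).aestronglyMeasurable.restrict ?_
    filter_upwards [ae_restrict_mem measurableSet_Iic] with s hs
    exact norm_apply_le_exp (hUdecay s t (hs.trans (min_le_left _ _)))
      (hGdecay s (hs.trans (min_le_right _ _)))
  have hIoc : IntegrableOn (fun s => U t s (G s)) (Ioc (min t t₀) t) :=
    (hU.intervalIntegrable_apply hB hGm hGb t _ t).1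
  exact (hIic.union hIoc).mono_set fun s hs =>
    (le_or_gt s (min t t₀)).imp id fun h => ⟨h, le_of_lt hs⟩

theorem eq_integral_Iio (hU : IsTransitionOperator B U) (hB : ∀ t, ‖B t‖ ≤ μ)
    {K σ N M α t₀ : ℝ} (hUdecay : ∀ s t, s ≤ t → ‖U t s‖ ≤ K * exp (-σ * (t - s)))
    (hσα : 0 < σ + α) {x G : ℝ → E} (hx : Continuous x)
    (hxdecay : ∀ s ≤ t₀, ‖x s‖ ≤ N * exp (α * (s - t₀))) (hGm : StronglyMeasurable G)
    (hGb : ∀ a b, ∃ C, ∀ s ∈ Icc a b, ‖G s‖ ≤ C)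
    (hGdecay : ∀ s ≤ t₀, ‖G s‖ ≤ M * exp (α * (s - t₀)))
    (hx' : ∀ s, HasDerivWithinAt x (B s (x s) + G s) (Ici s) s) (t : ℝ) :
    x t = ∫ s in Iio t, U t s (G s) := by
  have hint := hU.integrableOn_Iio_apply hB hUdecay hσα hGm hGb hGdecay t
  have hlim : Tendsto (fun a => U t a (x a) + ∫ s in a..t, U t s (G s)) atBot
      (𝓝 (0 + ∫ s in Iio t, U t s (G s))) := by
    refine (tendsto_apply_atBot hUdecay hσα hxdecay t).add ?_
    rw [← integral_Iic_eq_integral_Iio]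
    exact intervalIntegral_tendsto_integral_Iic t
      ((integrableOn_Iic_iff_integrableOn_Iio).2 hint) tendsto_id
  rw [← zero_add (∫ s in Iio t, U t s (G s))]
  exact tendsto_nhds_unique tendsto_const_nhds
    (hlim.congr fun a => (hU.eq_apply_add_integral hB hx hGm hGb hx' a t).symm)

theorem hasDeriv_of_eq_apply_add_integral (hU : IsTransitionOperator B U)
    (hB : ∀ t, ‖B t‖ ≤ μ) {x G : ℝ → E} {D : Set ℝ} (hGm : StronglyMeasurable G)
    (hGb : ∀ a b, ∃ C, ∀ s ∈ Icc a b, ‖G s‖ ≤ C) (hGr : ∀ b, ContinuousWithinAt G (Ici b) b)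
    (hGc : ∀ b ∉ D, ContinuousAt G b) {a : ℝ} {c : E}
    (hx : ∀ t, x t = U t a (c + ∫ s in a..t, U a s (G s))) (b : ℝ) :
    HasDerivWithinAt x (B b (x b) + G b) (Ici b) b ∧
      (b ∉ D → HasDerivAt x (B b (x b) + G b) b) := by
  have hright : ContinuousWithinAt G (Ioi b) b → HasDerivWithinAt x (B b (x b) + G b) (Ici b) b :=
    hU.hasDerivWithinAt_of_eq_apply_add_integral hB hGm hGb hx
  refine ⟨hright ((hGr b).mono Ioi_subset_Ici_self), fun hb => ?_⟩
  have hleft : HasDerivWithinAt x (B b (x b) + G b) (Iic b) b :=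
    hU.hasDerivWithinAt_of_eq_apply_add_integral hB hGm hGb hx (hGc b hb).continuousWithinAt
  simpa only [Iic_union_Ici, hasDerivWithinAt_univ] using hleft.union (hright (hGc b hb).continuousWithinAt)

theorem hasDeriv_iff_eq_apply_add_integral (hU : IsTransitionOperator B U)
    (hB : ∀ t, ‖B t‖ ≤ μ) {x G : ℝ → E} {D : Set ℝ} (hx : Continuous x)
    (hGm : StronglyMeasurable G) (hGb : ∀ a b, ∃ C, ∀ s ∈ Icc a b, ‖G s‖ ≤ C)
    (hGr : ∀ b, ContinuousWithinAt G (Ici b) b) (hGc : ∀ b ∉ D, ContinuousAt G b) (a : ℝ) :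
    (∀ b, HasDerivWithinAt x (B b (x b) + G b) (Ici b) b ∧
        (b ∉ D → HasDerivAt x (B b (x b) + G b) b)) ↔
      ∀ t, x t = U t a (x a) + ∫ s in a..t, U t s (G s) := by
  refine ⟨fun hx' => hU.eq_apply_add_integral hB hx hGm hGb (fun s => (hx' s).1) a,
    fun hrep => hU.hasDeriv_of_eq_apply_add_integral hB hGm hGb hGr hGc (a := a) (c := x a)
      fun t => ?_⟩
  rw [hrep t, hU.apply_add_integral_eq hB hGm hGb]

theorem hasDeriv_iff_eq_integral_Iio (hU : IsTransitionOperator B U) (hB : ∀ t, ‖B t‖ ≤ μ)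
    {K σ N M α t₀ : ℝ} (hUdecay : ∀ s t, s ≤ t → ‖U t s‖ ≤ K * exp (-σ * (t - s)))
    (hσα : 0 < σ + α) {x G : ℝ → E} {D : Set ℝ} (hx : Continuous x)
    (hxdecay : ∀ s ≤ t₀, ‖x s‖ ≤ N * exp (α * (s - t₀))) (hGm : StronglyMeasurable G)
    (hGb : ∀ a b, ∃ C, ∀ s ∈ Icc a b, ‖G s‖ ≤ C) (hGr : ∀ b, ContinuousWithinAt G (Ici b) b)
    (hGc : ∀ b ∉ D, ContinuousAt G b) (hGdecay : ∀ s ≤ t₀, ‖G s‖ ≤ M * exp (α * (s - t₀))) :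
    (∀ b, HasDerivWithinAt x (B b (x b) + G b) (Ici b) b ∧
        (b ∉ D → HasDerivAt x (B b (x b) + G b) b)) ↔
      ∀ t, IntegrableOn (fun s => U t s (G s)) (Iio t) ∧ x t = ∫ s in Iio t, U t s (G s) := by
  refine ⟨fun hx' t => ⟨hU.integrableOn_Iio_apply hB hUdecay hσα hGm hGb hGdecay t,
    hU.eq_integral_Iio hB hUdecay hσα hx hxdecay hGm hGb hGdecay (fun s => (hx' s).1) t⟩,
    fun hrep => hU.hasDeriv_of_eq_apply_add_integral hB hGm hGb hGr hGc (a := 0)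
      (c := ∫ s in Iio 0, U 0 s (G s)) fun t => ?_⟩
  rw [(hrep t).2, hU.integral_Iio_eq_apply_add_integral hB (fun t => (hrep t).1) 0 t]

end IsTransitionOperator

end TransitionOperator

section PiecewiseConstantArgument

theorem exists_mem_Ico_of_tendsto {θ : ℤ → ℝ} (hθtop : Tendsto θ atTop atTop)
    (hθbot : Tendsto θ atBot atBot) (t : ℝ) : ∃ i, θ i ≤ t ∧ t < θ (i + 1) := by
  obtain ⟨I, hI⟩ := eventually_atTop.1 (hθtop.eventually_gt_atTop t)
  obtain ⟨i, hi, hmax⟩ := Int.exists_greatest_of_bdd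
    ⟨I, fun j hj => le_of_not_gt fun h => (hI j h.le).not_ge hj⟩
    (hθbot.eventually_le_atBot t).exists
  exact ⟨i, hi, lt_of_not_ge fun h => by linarith [hmax (i + 1) h]⟩

def IsPiecewiseConstantArgument (θ : ℤ → ℝ) (β : ℝ → ℝ) : Prop :=
  ∀ (i : ℤ) (t : ℝ), θ i ≤ t → t < θ (i + 1) → β t = θ i

namespace IsPiecewiseConstantArgument

variable {θ : ℤ → ℝ} {β : ℝ → ℝ}

theorem le_self (hβ : IsPiecewiseConstantArgument θ β) (hθ : ∀ t, ∃ i, θ i ≤ t ∧ t < θ (i + 1))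
    (t : ℝ) : β t ≤ t := by
  obtain ⟨i, h₁, h₂⟩ := hθ t
  rw [hβ i t h₁ h₂]
  exact h₁

theorem monotone (hβ : IsPiecewiseConstantArgument θ β) (hθmono : Monotone θ)
    (hθ : ∀ t, ∃ i, θ i ≤ t ∧ t < θ (i + 1)) : Monotone β := by
  intro s t hst
  obtain ⟨i, hi₁, hi₂⟩ := hθ s
  obtain ⟨j, hj₁, hj₂⟩ := hθ t
  rw [hβ i s hi₁ hi₂, hβ j t hj₁ hj₂]
  exact hθmono (Int.lt_add_one_iff.1 (hθmono.reflect_lt (hi₁.trans_lt (hst.trans_lt hj₂))))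

theorem eventually_eq_nhdsWithin_Ici (hβ : IsPiecewiseConstantArgument θ β)
    (hθ : ∀ t, ∃ i, θ i ≤ t ∧ t < θ (i + 1)) (b : ℝ) : ∀ᶠ s in 𝓝[≥] b, β s = β b := by
  obtain ⟨i, h₁, h₂⟩ := hθ b
  filter_upwards [nhdsWithin_le_nhds (Iio_mem_nhds h₂), self_mem_nhdsWithin] with s hs₂ hs₁
  rw [hβ i s (h₁.trans hs₁) hs₂, hβ i b h₁ h₂]

theorem eventually_eq_nhds (hβ : IsPiecewiseConstantArgument θ β)
    (hθ : ∀ t, ∃ i, θ i ≤ t ∧ t < θ (i + 1)) {b : ℝ} (hb : b ∉ range θ) :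
    ∀ᶠ s in 𝓝 b, β s = β b := by
  obtain ⟨i, h₁, h₂⟩ := hθ b
  filter_upwards [Ioo_mem_nhds (h₁.lt_of_ne fun h => hb ⟨i, h⟩) h₂] with s hs
  rw [hβ i s hs.1.le hs.2, hβ i b h₁ h₂]

end IsPiecewiseConstantArgument

end PiecewiseConstantArgument

section DelayedForcing

variable {F G : Type*} [NormedAddCommGroup F] [NormedAddCommGroup G] {g : ℝ → F → F → G}
  {z : ℝ → F} {β : ℝ → ℝ}

theorem continuous_uncurry_of_lipschitz {L : ℝ} (hL : 0 ≤ L)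
    (hgc : ∀ a b, Continuous fun t => g t a b)
    (hlip : ∀ t a b a' b', ‖g t a b - g t a' b'‖ ≤ L * (‖a - a'‖ + ‖b - b'‖)) :
    Continuous fun p : ℝ × F × F => g p.1 p.2.1 p.2.2 := by
  refine continuous_prod_of_continuous_lipschitzWith' _ ⟨2 * L, by positivity⟩
    (fun t => LipschitzWith.of_dist_le_mul fun w w' => ?_) fun w => hgc w.1 w.2
  rw [dist_eq_norm, dist_eq_norm]
  calc ‖g t w.1 w.2 - g t w'.1 w'.2‖ ≤ L * (‖w.1 - w'.1‖ + ‖w.2 - w'.2‖) := hlip ..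
    _ ≤ L * (‖w - w'‖ + ‖w - w'‖) := by
      gcongr
      exacts [norm_fst_le (w - w'), norm_snd_le (w - w')]
    _ = 2 * L * ‖w - w'‖ := by ring

theorem stronglyMeasurable_delay (hg : Continuous fun p : ℝ × F × F => g p.1 p.2.1 p.2.2)
    (hz : Continuous z) (hβ : Measurable β) :
    StronglyMeasurable fun s => g s (z s) (z (β s)) :=
  hg.comp_stronglyMeasurable (stronglyMeasurable_id.prodMk
    (hz.stronglyMeasurable.prodMk (hz.stronglyMeasurable.comp_measurable hβ)))

theorem continuousWithinAt_delay (hg : Continuous fun p : ℝ × F × F => g p.1 p.2.1 p.2.2)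
    (hz : Continuous z) {S : Set ℝ} {b : ℝ} (hβ : ∀ᶠ s in 𝓝[S] b, β s = β b) :
    ContinuousWithinAt (fun s => g s (z s) (z (β s))) S b := by
  have hzβ : ContinuousWithinAt (fun s => z (β s)) S b :=
    continuousWithinAt_const.congr_of_eventuallyEq (hβ.mono fun s hs => congrArg z hs) rfl
  exact hg.continuousAt.comp_continuousWithinAt
    (continuousWithinAt_id.prodMk (hz.continuousWithinAt.prodMk hzβ))

theorem continuousAt_delay (hg : Continuous fun p : ℝ × F × F => g p.1 p.2.1 p.2.2)
    (hz : Continuous z) {b : ℝ} (hβ : ∀ᶠ s in 𝓝 b, β s = β b) :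
    ContinuousAt (fun s => g s (z s) (z (β s))) b :=
  (continuousWithinAt_univ _ _).1 (continuousWithinAt_delay hg hz (by rwa [nhdsWithin_univ]))

theorem exists_bound_delay (hg : Continuous fun p : ℝ × F × F => g p.1 p.2.1 p.2.2)
    (hz : Continuous z) (hβmono : Monotone β) (hβle : ∀ t, β t ≤ t) (a b : ℝ) :
    ∃ C, ∀ s ∈ Icc a b, ‖g s (z s) (z (β s))‖ ≤ C := by
  obtain ⟨C, hC⟩ := (isCompact_Icc.prod ((isCompact_Icc.image hz).prod
    (isCompact_Icc.image hz))).exists_bound_of_continuousOn hg.continuousOn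
  exact ⟨C, fun s hs => hC (s, z s, z (β s)) ⟨hs, ⟨s, ⟨(hβle a).trans hs.1, hs.2⟩, rfl⟩,
    ⟨β s, ⟨hβmono hs.1, (hβle s).trans hs.2⟩, rfl⟩⟩⟩

theorem norm_delay_le {L N α t₀ : ℝ} (hg : ∀ t a b, ‖g t a b‖ ≤ L * (‖a‖ + ‖b‖)) (hL : 0 ≤ L)
    (hN : 0 ≤ N) (hα : 0 ≤ α) (hβle : ∀ t, β t ≤ t)
    (hz : ∀ t ≤ t₀, ‖z t‖ ≤ N * exp (α * (t - t₀))) {s : ℝ} (hs : s ≤ t₀) :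
    ‖g s (z s) (z (β s))‖ ≤ 2 * L * N * exp (α * (s - t₀)) := by
  have hzβ : ‖z (β s)‖ ≤ N * exp (α * (s - t₀)) :=
    (hz _ ((hβle s).trans hs)).trans (by gcongr; exact hβle s)
  calc ‖g s (z s) (z (β s))‖ ≤ L * (‖z s‖ + ‖z (β s)‖) := hg _ _ _
    _ ≤ L * (N * exp (α * (s - t₀)) + N * exp (α * (s - t₀))) := by gcongr; exact hz s hs
    _ = 2 * L * N * exp (α * (s - t₀)) := by ring

end DelayedForcing

theorem stmt_4_general
    (k m : ℕ)
    (θ : ℤ → ℝ) (hθmono : StrictMono θ)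
    (hθtop : Tendsto θ atTop atTop) (hθbot : Tendsto θ atBot atBot)
    (β : ℝ → ℝ) (hβ : ∀ (i : ℤ) (t : ℝ), θ i ≤ t → t < θ (i + 1) → β t = θ i)
    (Bp : ℝ → Ek k →L[ℝ] Ek k) (Bm : ℝ → Ek m →L[ℝ] Ek m)
    (U : ℝ → ℝ → Ek k →L[ℝ] Ek k) (V : ℝ → ℝ → Ek m →L[ℝ] Ek m)
    (hUid : ∀ s : ℝ, U s s = ContinuousLinearMap.id ℝ (Ek k))
    (hVid : ∀ s : ℝ, V s s = ContinuousLinearMap.id ℝ (Ek m))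
    (hUderiv : ∀ s t : ℝ, HasDerivAt (fun r => U r s) ((Bp t).comp (U t s)) t)
    (hVderiv : ∀ s t : ℝ, HasDerivAt (fun r => V r s) ((Bm t).comp (V t s)) t)
    (K σ : ℝ) (hσ : 0 < σ)
    (hU : ∀ s t : ℝ, s ≤ t → ‖U t s‖ ≤ K * Real.exp (-σ * (t - s)))
    (gp : ℝ → Ek k × Ek m → Ek k × Ek m → Ek k)
    (gm : ℝ → Ek k × Ek m → Ek k × Ek m → Ek m)
    (hgpc : ∀ zz ww, Continuous fun t => gp t zz ww)
    (hgmc : ∀ zz ww, Continuous fun t => gm t zz ww)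
    (L : ℝ) (hL : 0 < L)
    (hlip : ∀ (t : ℝ) (z₁ w₁ z₂ w₂ : Ek k × Ek m),
      ‖gp t z₁ w₁ - gp t z₂ w₂‖ + ‖gm t z₁ w₁ - gm t z₂ w₂‖ ≤
        L * (‖z₁ - z₂‖ + ‖w₁ - w₂‖))
    (hg0 : ∀ t : ℝ, gp t 0 0 = 0 ∧ gm t 0 0 = 0)
    (μ : ℝ) (hμ : ∀ t : ℝ, ‖Bp t‖ ≤ μ ∧ ‖Bm t‖ ≤ μ)
    (N α t₀ : ℝ) (hN : 0 < N) (hα : 0 < α)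
    (z : ℝ → Ek k × Ek m) (hzc : Continuous z)
    (hdecay : ∀ t : ℝ, t ≤ t₀ → ‖z t‖ ≤ N * Real.exp (α * (t - t₀))) :
    SolOn θ β Bp Bm gp gm z Set.univ ↔
      ∀ t : ℝ,
        IntegrableOn (fun s => U t s (gp s (z s) (z (β s)))) (Iio t) ∧
        ((z t).1 = ∫ s in Iio t, U t s (gp s (z s) (z (β s)))) ∧
        (z t).2 = V t t₀ (z t₀).2 + ∫ s in t₀..t, V t s (gm s (z s) (z (β s))) := by
  have hθ := exists_mem_Ico_of_tendsto hθtop hθbot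
  have hβ' : IsPiecewiseConstantArgument θ β := hβ
  have hβle := hβ'.le_self hθ
  have hβmono := hβ'.monotone hθmono.monotone hθ
  have hgp := continuous_uncurry_of_lipschitz hL.le hgpc fun t a b a' b' =>
    (le_add_of_nonneg_right (norm_nonneg _)).trans (hlip t a b a' b')
  have hgm := continuous_uncurry_of_lipschitz hL.le hgmc fun t a b a' b' =>
    (le_add_of_nonneg_left (norm_nonneg _)).trans (hlip t a b a' b')
  have hgp0 (t : ℝ) (a b : Ek k × Ek m) : ‖gp t a b‖ ≤ L * (‖a‖ + ‖b‖) := by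
    simpa only [(hg0 t).1, sub_zero] using
      (le_add_of_nonneg_right (norm_nonneg _)).trans (hlip t a b 0 0)
  have hu := IsTransitionOperator.hasDeriv_iff_eq_integral_Iio ⟨hUid, hUderiv⟩
    (fun t => (hμ t).1) hU (add_pos hσ hα) (D := range θ) (continuous_fst.comp hzc)
    (fun s hs => (norm_fst_le _).trans (hdecay s hs))
    (stronglyMeasurable_delay hgp hzc hβmono.measurable) (exists_bound_delay hgp hzc hβmono hβle)
    (fun b => continuousWithinAt_delay hgp hzc (hβ'.eventually_eq_nhdsWithin_Ici hθ b))
    (fun b hb => continuousAt_delay hgp hzc (hβ'.eventually_eq_nhds hθ hb))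
    (fun s hs => norm_delay_le hgp0 hL.le hN.le hα.le hβle hdecay hs)
  have hv := IsTransitionOperator.hasDeriv_iff_eq_apply_add_integral ⟨hVid, hVderiv⟩
    (fun t => (hμ t).2) (D := range θ) (continuous_snd.comp hzc)
    (stronglyMeasurable_delay hgm hzc hβmono.measurable) (exists_bound_delay hgm hzc hβmono hβle)
    (fun b => continuousWithinAt_delay hgm hzc (hβ'.eventually_eq_nhdsWithin_Ici hθ b))
    (fun b hb => continuousAt_delay hgm hzc (hβ'.eventually_eq_nhds hθ hb)) t₀
  simp only [SolOn, hzc.continuousOn, true_and, mem_univ, forall_const, inter_univ,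
    hasDerivWithinAt_univ, imp_and, forall_and] at hu hv ⊢
  tauto

theorem stmt_4
    (k m : ℕ) (hk : 1 ≤ k) (hm : 1 ≤ m)
    (θ : ℤ → ℝ) (hθmono : StrictMono θ)
    (θb : ℝ) (hθb : 0 < θb) (hgap : ∀ i : ℤ, θ (i + 1) - θ i ≤ θb)
    (hθtop : Tendsto θ atTop atTop) (hθbot : Tendsto θ atBot atBot)
    (β : ℝ → ℝ) (hβ : ∀ (i : ℤ) (t : ℝ), θ i ≤ t → t < θ (i + 1) → β t = θ i)
    (Bp : ℝ → Ek k →L[ℝ] Ek k) (Bm : ℝ → Ek m →L[ℝ] Ek m)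
    (hBp : Continuous Bp) (hBm : Continuous Bm)
    (U : ℝ → ℝ → Ek k →L[ℝ] Ek k) (V : ℝ → ℝ → Ek m →L[ℝ] Ek m)
    (hUid : ∀ s : ℝ, U s s = ContinuousLinearMap.id ℝ (Ek k))
    (hVid : ∀ s : ℝ, V s s = ContinuousLinearMap.id ℝ (Ek m))
    (hUderiv : ∀ s t : ℝ, HasDerivAt (fun r => U r s) ((Bp t).comp (U t s)) t)
    (hVderiv : ∀ s t : ℝ, HasDerivAt (fun r => V r s) ((Bm t).comp (V t s)) t)
    (K σ : ℝ) (hK : 1 ≤ K) (hσ : 0 < σ)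
    (hU : ∀ s t : ℝ, s ≤ t → ‖U t s‖ ≤ K * Real.exp (-σ * (t - s)))
    (hV : ∀ s t : ℝ, t ≤ s → ‖V t s‖ ≤ K * Real.exp (-σ * (s - t)))
    (gp : ℝ → Ek k × Ek m → Ek k × Ek m → Ek k)
    (gm : ℝ → Ek k × Ek m → Ek k × Ek m → Ek m)
    (hgpc : ∀ zz ww, Continuous fun t => gp t zz ww)
    (hgmc : ∀ zz ww, Continuous fun t => gm t zz ww)
    (L : ℝ) (hL : 0 < L)
    (hlip : ∀ (t : ℝ) (z₁ w₁ z₂ w₂ : Ek k × Ek m),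
      ‖gp t z₁ w₁ - gp t z₂ w₂‖ + ‖gm t z₁ w₁ - gm t z₂ w₂‖ ≤
        L * (‖z₁ - z₂‖ + ‖w₁ - w₂‖))
    (hg0 : ∀ t : ℝ, gp t 0 0 = 0 ∧ gm t 0 0 = 0)
    (μ : ℝ) (hμ : ∀ t : ℝ, ‖Bp t‖ ≤ μ ∧ ‖Bm t‖ ≤ μ)
    (hbw : L * Real.exp (μ * θb) * θb *
        (1 + Real.exp (μ * θb) * (1 + L * θb) * Real.exp (Real.exp (μ * θb) * L * θb)) <
      Real.exp (-(μ * θb)))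
    (N α t₀ : ℝ) (hN : 0 < N) (hα : 0 < α) (hασ : α < σ)
    (z : ℝ → Ek k × Ek m) (hzc : Continuous z)
    (hdecay : ∀ t : ℝ, t ≤ t₀ → ‖z t‖ ≤ N * Real.exp (α * (t - t₀))) :
    SolOn θ β Bp Bm gp gm z Set.univ ↔
      ∀ t : ℝ,
        IntegrableOn (fun s => U t s (gp s (z s) (z (β s)))) (Iio t) ∧
        ((z t).1 = ∫ s in Iio t, U t s (gp s (z s) (z (β s)))) ∧
        (z t).2 = V t t₀ (z t₀).2 + ∫ s in t₀..t, V t s (gm s (z s) (z (β s))) :=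
  stmt_4_general k m θ hθmono hθtop hθbot β hβ Bp Bm U V hUid hVid hUderiv hVderiv K σ hσ hU gp gm
    hgpc hgmc L hL hlip hg0 μ hμ N α t₀ hN hα z hzc hdecay
end
end

section
/- Assume the box-diagonal EPCAG setting, fix α ∈ (0,σ) and assume K(K²+1)(1+exp(αθ̄))·L < σ. Let z = (u,v) be a solution of system (3*) on [t₀,∞) which is unbounded on [t₀,∞) (equivalently, whose initial point does not lie on the stable surface S⁺). Then ‖v(t)‖ → ∞ as t → ∞. -/
open Set Real Filter MeasureTheory
open scoped Topology

noncomputable section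

lemma gron_zero_s11 {E : Type*} [NormedAddCommGroup E] [NormedSpace ℝ E]
    {f f' : ℝ → E} {a b C : ℝ}
    (hcont : ContinuousOn f (Icc a b))
    (hder : ∀ t ∈ Ico a b, HasDerivWithinAt f (f' t) (Ici t) t)
    (hbound : ∀ t ∈ Ico a b, ‖f' t‖ ≤ C * ‖f t‖)
    (h0 : f a = 0) : ∀ t ∈ Icc a b, f t = 0 := by
  intro t ht
  have h := norm_le_gronwallBound_of_norm_deriv_right_le (δ := 0) (ε := 0) hcont hder
      (by simp [h0]) (fun x hx => by simpa using hbound x hx) t ht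
  rw [gronwallBound_ε0] at h
  simp only [zero_mul] at h
  exact norm_le_zero_iff.mp h

lemma uniq_lin {E : Type*} [NormedAddCommGroup E] [NormedSpace ℝ E]
    {A : ℝ → E →L[ℝ] E} (hA : Continuous A) {f : ℝ → E}
    (hf : ∀ t, HasDerivAt f (A t (f t)) t) {b : ℝ} (h0 : f b = 0) :
    ∀ t, f t = 0 := by
  have key : ∀ (g : ℝ → E) (Ag : ℝ → E →L[ℝ] E), Continuous Ag →
      (∀ t, HasDerivAt g (Ag t (g t)) t) → g b = 0 → ∀ T, b ≤ T → g T = 0 := by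
    intro g Ag hAg hg hg0 T hT
    obtain ⟨C, hC⟩ := (isCompact_Icc (a := b) (b := T)).exists_bound_of_continuousOn
      hAg.continuousOn
    refine gron_zero_s11 (C := max C 0) (f' := fun t => Ag t (g t))
      (fun t _ => (hg t).continuousAt.continuousWithinAt)
      (fun t _ => (hg t).hasDerivWithinAt) ?_ hg0 T ⟨hT, le_rfl⟩
    intro t ht
    calc ‖Ag t (g t)‖ ≤ ‖Ag t‖ * ‖g t‖ := (Ag t).le_opNorm _
    _ ≤ max C 0 * ‖g t‖ := by
        have := hC t (Ico_subset_Icc_self ht)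
        gcongr
        exact le_max_of_le_left this
  intro t
  rcases le_total b t with h | h
  · exact key f A hA hf h0 t h
  · have hinner : ∀ s : ℝ, HasDerivAt (fun s : ℝ => 2 * b - s) (-1) s := by
      intro s
      exact (hasDerivAt_id s).const_sub (2 * b)
    have hg : ∀ s, HasDerivAt (fun s => f (2 * b - s))
        ((-(A (2 * b - s))) (f (2 * b - s))) s := by
      intro s
      have := HasDerivAt.scomp s (hf (2 * b - s)) (hinner s)
      simpa [Function.comp_def] using this
    have hAg : Continuous fun s => -(A (2 * b - s)) :=
      (hA.comp (by continuity)).neg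
    have := key (fun s => f (2 * b - s)) (fun s => -(A (2 * b - s))) hAg hg
      (by show f (2 * b - b) = 0; rw [show 2 * b - b = b by ring]; exact h0) (2 * b - t) (by linarith)
    show f t = 0
    rw [show t = 2 * b - (2 * b - t) by ring]
    exact this

lemma cocycle_of {F : Type*} [NormedAddCommGroup F] [NormedSpace ℝ F]
    (B : ℝ → F →L[ℝ] F) (hB : Continuous B) (U : ℝ → ℝ → F →L[ℝ] F)
    (hUid : ∀ s, U s s = ContinuousLinearMap.id ℝ F)
    (hUd : ∀ s t, HasDerivAt (fun r => U r s) ((B t).comp (U t s)) t) :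
    ∀ t s r, (U t s).comp (U s r) = U t r := by
  intro t s r
  have hA : Continuous (fun t => (ContinuousLinearMap.compL ℝ F F F) (B t)) :=
    (ContinuousLinearMap.compL ℝ F F F).continuous.comp hB
  have main : ∀ t, ((U t s).comp (U s r) - U t r) = 0 := by
    refine uniq_lin (A := fun t => (ContinuousLinearMap.compL ℝ F F F) (B t)) hA
      (f := fun t => (U t s).comp (U s r) - U t r) ?_ (b := s) ?_
    · intro t
      have h1 : HasDerivAt (fun t => (U t s).comp (U s r))
          (((B t).comp (U t s)).comp (U s r)) t := by
        simpa using (hUd s t).clm_comp (hasDerivAt_const t (U s r))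
      have h2 := h1.sub (hUd r t)
      convert h2 using 1
      ext v
      simp [ContinuousLinearMap.compL_apply, ContinuousLinearMap.comp_apply, ContinuousLinearMap.sub_apply]
      ext v
      simp [ContinuousLinearMap.compL_apply, ContinuousLinearMap.comp_apply, ContinuousLinearMap.sub_apply]
    · simp [hUid]
  have := main t
  rwa [sub_eq_zero] at this

lemma cont_snd {F : Type*} [NormedAddCommGroup F] [NormedSpace ℝ F] [CompleteSpace F]
    (U : ℝ → ℝ → F →L[ℝ] F)
    (hUid : ∀ s, U s s = ContinuousLinearMap.id ℝ F)
    (hcc : ∀ t s r, (U t s).comp (U s r) = U t r)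
    (hc1 : ∀ a : ℝ, Continuous fun t => U t a)
    (a : ℝ) : Continuous fun s => U a s := by
  have hunit : ∀ s : ℝ, (U s a) * (U a s) = 1 ∧ (U a s) * (U s a) = 1 := by
    intro s
    constructor <;>
      simp [ContinuousLinearMap.mul_def, hcc, hUid, ContinuousLinearMap.one_def]
  have heq : (fun s => U a s) = fun s => Ring.inverse (U s a) := by
    funext s
    exact (Ring.inverse_unit ⟨U s a, U a s, (hunit s).1, (hunit s).2⟩).symm
  rw [heq, continuous_iff_continuousAt]
  intro s
  have h1 : ContinuousAt Ring.inverse ((fun t => U t a) s) :=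
    NormedRing.inverse_continuousAt ⟨U s a, U a s, (hunit s).1, (hunit s).2⟩
  exact ContinuousAt.comp (g := Ring.inverse) (f := fun t => U t a) (x := s) h1
    ((hc1 a).continuousAt)

lemma my_int_exp {c : ℝ} (hc : c ≠ 0) (a b : ℝ) :
    ∫ s in a..b, rexp (c * s) = c⁻¹ * (rexp (c * b) - rexp (c * a)) := by
  have := intervalIntegral.integral_comp_mul_left (f := fun x => rexp x) (a := a) (b := b) hc
  rw [integral_exp] at this
  simpa [smul_eq_mul] using this

lemma exp_int_le {σ : ℝ} (hσ : 0 < σ) (a b d : ℝ) (hab : a ≤ b) (hbd : b ≤ d) :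
    ∫ s in a..b, rexp (σ * (s - d)) ≤ 1 / σ := by
  have h1 : (fun s => rexp (σ * (s - d))) = fun s => rexp (-(σ * d)) * rexp (σ * s) := by
    funext s; rw [← Real.exp_add]; ring_nf
  rw [h1, intervalIntegral.integral_const_mul, my_int_exp (ne_of_gt hσ)]
  have e1 : rexp (-(σ * d)) * rexp (σ * b) ≤ 1 := by
    rw [← Real.exp_add]
    apply Real.exp_le_one_iff.mpr
    nlinarith
  have e2 : (0:ℝ) < rexp (-(σ * d)) * rexp (σ * a) := by positivity
  have e3 : (0:ℝ) < σ⁻¹ := by positivity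
  rw [one_div]
  nlinarith [mul_le_mul_of_nonneg_left e1 e3.le, mul_pos e3 e2]

lemma exp_int_le' {σ : ℝ} (hσ : 0 < σ) (a b d : ℝ) (hab : a ≤ b) (hda : d ≤ a) :
    ∫ s in a..b, rexp (σ * (d - s)) ≤ 1 / σ := by
  have h1 : (fun s => rexp (σ * (d - s))) = fun s => rexp (σ * d) * rexp (-σ * s) := by
    funext s; rw [← Real.exp_add]; ring_nf
  have hc : (-σ : ℝ) ≠ 0 := ne_of_lt (by linarith)
  rw [h1, intervalIntegral.integral_const_mul, my_int_exp hc]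
  have e1 : rexp (σ * d) * rexp (-σ * a) ≤ 1 := by
    rw [← Real.exp_add]
    apply Real.exp_le_one_iff.mpr
    nlinarith
  have e2 : (0:ℝ) < rexp (σ * d) * rexp (-σ * b) := by positivity
  have e3 : (0:ℝ) < σ⁻¹ := by positivity
  rw [one_div]
  have hinv : (-σ)⁻¹ = -σ⁻¹ := by
    field_simp
  rw [hinv]
  nlinarith [mul_le_mul_of_nonneg_left e1 e3.le, mul_pos e3 e2]

lemma voc {F : Type*} [NormedAddCommGroup F] [NormedSpace ℝ F] [CompleteSpace F]
    (B : ℝ → F →L[ℝ] F) (hB : Continuous B) (U : ℝ → ℝ → F →L[ℝ] F)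
    (hUid : ∀ s, U s s = ContinuousLinearMap.id ℝ F)
    (hUd : ∀ s t, HasDerivAt (fun r => U r s) ((B t).comp (U t s)) t)
    (t₀ : ℝ) (G : ℝ → F) (x : ℝ → F)
    (hxc : ContinuousOn x (Ici t₀))
    (hxd : ∀ t, t₀ ≤ t → HasDerivWithinAt x (B t (x t) + G t) (Ici t) t)
    (hFi : ∀ a b, t₀ ≤ a → a ≤ b → IntervalIntegrable (fun s => U t₀ s (G s)) volume a b)
    (hFc : ∀ r, t₀ ≤ r → ContinuousWithinAt (fun s => U t₀ s (G s)) (Ici r) r) :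
    ∀ t, t₀ ≤ t → x t = U t t₀ (x t₀ + ∫ s in t₀..t, U t₀ s (G s)) := by
  have hcc := cocycle_of B hB U hUid hUd
  set F1 : ℝ → F := fun s => U t₀ s (G s) with hF1
  set cp : ℝ → F := fun r => x t₀ + ∫ s in t₀..r, F1 s with hcp
  set y : ℝ → F := fun r => U r t₀ (cp r) with hy
  intro T hT
  have hUcont : ∀ a : ℝ, Continuous fun t => U t a := fun a =>
    continuous_iff_continuousAt.mpr (fun t => (hUd a t).continuousAt)
  have hcpc : ContinuousOn cp (Icc t₀ T) := by
    apply continuousOn_const.add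
    have := intervalIntegral.continuousOn_primitive_interval'
      (hFi t₀ T le_rfl hT) (left_mem_uIcc)
    rwa [uIcc_of_le hT] at this
  have hyc : ContinuousOn y (Icc t₀ T) := by
    have happ : Continuous fun p : (F →L[ℝ] F) × F => p.1 p.2 :=
      isBoundedBilinearMap_apply.continuous
    exact happ.comp_continuousOn (((hUcont t₀).continuousOn).prodMk hcpc)
  have hw : ∀ t ∈ Icc t₀ T, x t - y t = 0 := by
    obtain ⟨C, hC⟩ := (isCompact_Icc (a := t₀) (b := T)).exists_bound_of_continuousOn
      hB.continuousOn
    refine gron_zero_s11 (C := max C 0) (f' := fun t => B t (x t - y t))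
      ((hxc.mono Icc_subset_Ici_self).sub hyc) ?_ ?_ ?_
    · intro t ht
      have hcpd : HasDerivWithinAt cp (F1 t) (Ici t) t := by
        apply HasDerivWithinAt.const_add
        have hii : IntervalIntegrable F1 volume t₀ t := hFi t₀ t le_rfl ht.1
        have hmeas : StronglyMeasurableAtFilter F1 (𝓝[>] t) volume := by
          refine ⟨Ioc t (t+1), Ioc_mem_nhdsGT_of_mem ⟨le_rfl, by linarith⟩, ?_⟩
          have h2 : IntervalIntegrable F1 volume t (t+1) := hFi t (t+1) ht.1 (by linarith)
          rw [intervalIntegrable_iff_integrableOn_Ioc_of_le (by linarith : t ≤ t+1)] at h2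
          exact h2.aestronglyMeasurable
        exact intervalIntegral.integral_hasDerivWithinAt_right hii hmeas
          ((hFc t ht.1).mono Ioi_subset_Ici_self)
      have hyd : HasDerivWithinAt y (B t (y t) + G t) (Ici t) t := by
        have hder := ((hUd t₀ t).hasDerivWithinAt (s := Ici t)).clm_apply hcpd
        have h1 : (U t t₀) (F1 t) = G t := by
          rw [hF1]
          show (U t t₀) ((U t₀ t) (G t)) = G t
          rw [← ContinuousLinearMap.comp_apply, hcc t t₀ t, hUid]
          rfl
        have h2 : ((B t).comp (U t t₀)) (cp t) = B t (y t) := by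
          rw [ContinuousLinearMap.comp_apply]
        rw [h1, h2] at hder
        exact hder
      have hxd' := hxd t ht.1
      have h3 : B t (x t) + G t - (B t (y t) + G t) = B t (x t - y t) := by
        rw [map_sub]; abel
      have := hxd'.sub hyd
      rwa [h3] at this
    · intro t ht
      calc ‖B t (x t - y t)‖ ≤ ‖B t‖ * ‖x t - y t‖ := (B t).le_opNorm _
        _ ≤ max C 0 * ‖x t - y t‖ := by
            gcongr
            exact le_max_of_le_left (hC t (Ico_subset_Icc_self ht))
    · show x t₀ - y t₀ = 0
      rw [hy]
      show x t₀ - (U t₀ t₀) (cp t₀) = 0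
      rw [hUid, hcp]
      show x t₀ - (x t₀ + ∫ s in t₀..t₀, F1 s) = 0
      rw [intervalIntegral.integral_same, add_zero, sub_self]
  have := hw T ⟨hT, le_rfl⟩
  have hxy := sub_eq_zero.mp this
  rw [hxy]

lemma piece_single {P : Type*} {E' : Type*} [NormedAddCommGroup E'] [NormedSpace ℝ E']
    (θ : ℤ → ℝ) (w : ℝ → P) (c : ℤ → P)
    (hw : ∀ (i : ℤ) (s : ℝ), θ i ≤ s → s < θ (i + 1) → w s = c i)
    (t₀ : ℝ) (H : ℝ → P → E') (hH : ∀ p, ContinuousOn (fun s => H s p) (Ici t₀))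
    (j : ℤ) (a b : ℝ) (h0 : t₀ ≤ a) (hab : a ≤ b) (hja : θ j ≤ a) (hbj : b ≤ θ (j + 1)) :
    IntervalIntegrable (fun s => H s (w s)) volume a b := by
  have hint : IntervalIntegrable (fun s => H s (c j)) volume a b := by
    apply ContinuousOn.intervalIntegrable
    apply (hH (c j)).mono
    rw [uIcc_of_le hab]
    exact fun x hx => le_trans h0 hx.1
  apply hint.congr_ae
  rw [uIoc_of_le hab, Filter.EventuallyEq, ae_restrict_iff' measurableSet_Ioc]
  have hne : ∀ᵐ s : ℝ, s ∉ ({θ (j + 1)} : Set ℝ) :=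
    measure_eq_zero_iff_ae_notMem.mp (measure_singleton _)
  filter_upwards [hne] with s hs hmem
  have hsne : s ≠ θ (j + 1) := by simpa using hs
  have hslt : s < θ (j + 1) := lt_of_le_of_ne (hmem.2.trans hbj) hsne
  rw [hw j s (hja.trans hmem.1.le) hslt]

lemma piece_ind {P : Type*} {E' : Type*} [NormedAddCommGroup E'] [NormedSpace ℝ E']
    (θ : ℤ → ℝ) (w : ℝ → P) (c : ℤ → P)
    (hw : ∀ (i : ℤ) (s : ℝ), θ i ≤ s → s < θ (i + 1) → w s = c i)
    (t₀ : ℝ) (H : ℝ → P → E') (hH : ∀ p, ContinuousOn (fun s => H s p) (Ici t₀)) :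
    ∀ (n : ℕ) (j : ℤ) (a b : ℝ), t₀ ≤ a → a ≤ b → b ≤ θ j → θ (j - n) ≤ a →
      IntervalIntegrable (fun s => H s (w s)) volume a b := by
  intro n
  induction n with
  | zero =>
      intro j a b h0 hab hbj hja
      simp only [Nat.cast_zero, sub_zero] at hja
      have hba : a = b := le_antisymm hab (hbj.trans hja)
      rw [hba]
  | succ n ih =>
      intro j a b h0 hab hbj hja
      have hcast : θ (j - ((n : ℤ) + 1)) = θ (j - 1 - (n : ℤ)) := by ring_nf
      by_cases hca : θ (j - 1) ≤ a
      · exact piece_single θ w c hw t₀ H hH (j - 1) a b h0 hab hca (by simpa using hbj)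
      · push_neg at hca
        by_cases hcb : b ≤ θ (j - 1)
        · refine ih (j - 1) a b h0 hab hcb ?_
          rw [← hcast]
          exact le_trans (by push_cast; exact le_of_eq (by ring_nf)) hja
        · push_neg at hcb
          have h1 : IntervalIntegrable (fun s => H s (w s)) volume a (θ (j - 1)) := by
            refine ih (j - 1) a (θ (j - 1)) h0 hca.le le_rfl ?_
            rw [← hcast]
            exact le_trans (by push_cast; exact le_of_eq (by ring_nf)) hja
          have h2 : IntervalIntegrable (fun s => H s (w s)) volume (θ (j - 1)) b :=
            piece_single θ w c hw t₀ H hH (j - 1) (θ (j - 1)) b (h0.trans hca.le) hcb.le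
              le_rfl (by simpa using hbj)
          exact h1.trans h2


set_option maxHeartbeats 2000000 in
theorem stmt_11
    (k m : ℕ) (hk : 1 ≤ k) (hm : 1 ≤ m)
    (θ : ℤ → ℝ) (hθmono : StrictMono θ)
    (θb : ℝ) (hθb : 0 < θb) (hgap : ∀ i : ℤ, θ (i + 1) - θ i ≤ θb)
    (hθtop : Tendsto θ atTop atTop) (hθbot : Tendsto θ atBot atBot)
    (β : ℝ → ℝ) (hβ : ∀ (i : ℤ) (t : ℝ), θ i ≤ t → t < θ (i + 1) → β t = θ i)
    (Bp : ℝ → Ek k →L[ℝ] Ek k) (Bm : ℝ → Ek m →L[ℝ] Ek m)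
    (hBp : Continuous Bp) (hBm : Continuous Bm)
    (U : ℝ → ℝ → Ek k →L[ℝ] Ek k) (V : ℝ → ℝ → Ek m →L[ℝ] Ek m)
    (hUid : ∀ s : ℝ, U s s = ContinuousLinearMap.id ℝ (Ek k))
    (hVid : ∀ s : ℝ, V s s = ContinuousLinearMap.id ℝ (Ek m))
    (hUderiv : ∀ s t : ℝ, HasDerivAt (fun r => U r s) ((Bp t).comp (U t s)) t)
    (hVderiv : ∀ s t : ℝ, HasDerivAt (fun r => V r s) ((Bm t).comp (V t s)) t)
    (K σ : ℝ) (hK : 1 ≤ K) (hσ : 0 < σ)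
    (hU : ∀ s t : ℝ, s ≤ t → ‖U t s‖ ≤ K * Real.exp (-σ * (t - s)))
    (hV : ∀ s t : ℝ, t ≤ s → ‖V t s‖ ≤ K * Real.exp (-σ * (s - t)))
    (gp : ℝ → Ek k × Ek m → Ek k × Ek m → Ek k)
    (gm : ℝ → Ek k × Ek m → Ek k × Ek m → Ek m)
    (hgpc : ∀ zz ww, Continuous fun t => gp t zz ww)
    (hgmc : ∀ zz ww, Continuous fun t => gm t zz ww)
    (L : ℝ) (hL : 0 < L)
    (hlip : ∀ (t : ℝ) (z₁ w₁ z₂ w₂ : Ek k × Ek m),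
      ‖gp t z₁ w₁ - gp t z₂ w₂‖ + ‖gm t z₁ w₁ - gm t z₂ w₂‖ ≤
        L * (‖z₁ - z₂‖ + ‖w₁ - w₂‖))
    (hg0 : ∀ t : ℝ, gp t 0 0 = 0 ∧ gm t 0 0 = 0)
    (α : ℝ) (hα : 0 < α) (hασ : α < σ)
    (hsmall : K * (K ^ 2 + 1) * (1 + Real.exp (α * θb)) * L < σ)
    (t₀ : ℝ) (z : ℝ → Ek k × Ek m)
    (hz : SolOn θ β Bp Bm gp gm z (Ici t₀))
    (hub : ¬ ∃ C : ℝ, ∀ t : ℝ, t₀ ≤ t → ‖z t‖ ≤ C)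
    :
    Tendsto (fun t : ℝ => ‖(z t).2‖) atTop atTop := by
    classical
  obtain ⟨hzc, hzd⟩ := hz
  -- basic positivity
  have hK0 : (0:ℝ) < K := lt_of_lt_of_le one_pos hK
  -- floor structure
  have floor_ex : ∀ t : ℝ, ∃ i : ℤ, θ i ≤ t ∧ t < θ (i + 1) := by
    intro t
    have h1 : ∃ i : ℤ, θ i ≤ t := (hθbot.eventually (eventually_le_atBot t)).exists
    have h2 : ∃ b : ℤ, ∀ i : ℤ, θ i ≤ t → i ≤ b := by
      obtain ⟨N, hN⟩ := eventually_atTop.mp (hθtop.eventually (eventually_gt_atTop t))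
      refine ⟨N, fun i hi => ?_⟩
      by_contra hlt
      push_neg at hlt
      exact absurd hi (not_le.mpr (hN i hlt.le))
    obtain ⟨i, hiP, hiMax⟩ := Int.exists_greatest_of_bdd h2 h1
    refine ⟨i, hiP, ?_⟩
    by_contra hle
    push_neg at hle
    have := hiMax (i + 1) hle
    omega
  have floor_uniq : ∀ (i j : ℤ) (t : ℝ), θ i ≤ t → t < θ (i + 1) → θ j ≤ t → t < θ (j + 1) →
      i = j := by
    intro i j t h1 h2 h3 h4
    by_contra hne
    rcases lt_or_gt_of_ne hne with h | h
    · have hij : i + 1 ≤ j := by omega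
      have := hθmono.monotone hij
      linarith
    · have hij : j + 1 ≤ i := by omega
      have := hθmono.monotone hij
      linarith
  -- Lipschitz consequences
  have hgp_lip : ∀ (t : ℝ) (z₁ w₁ z₂ w₂ : Ek k × Ek m),
      ‖gp t z₁ w₁ - gp t z₂ w₂‖ ≤ L * (‖z₁ - z₂‖ + ‖w₁ - w₂‖) := fun t z₁ w₁ z₂ w₂ =>
    le_trans (le_add_of_nonneg_right (norm_nonneg _)) (hlip t z₁ w₁ z₂ w₂)
  have hgm_lip : ∀ (t : ℝ) (z₁ w₁ z₂ w₂ : Ek k × Ek m),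
      ‖gm t z₁ w₁ - gm t z₂ w₂‖ ≤ L * (‖z₁ - z₂‖ + ‖w₁ - w₂‖) := fun t z₁ w₁ z₂ w₂ =>
    le_trans (le_add_of_nonneg_left (norm_nonneg _)) (hlip t z₁ w₁ z₂ w₂)
  have hgpb : ∀ s : ℝ, ‖gp s (z s) (z (β s))‖ ≤ L * (‖z s‖ + ‖z (β s)‖) := by
    intro s
    have := hgp_lip s (z s) (z (β s)) 0 0
    simpa [(hg0 s).1] using this
  have hgmb : ∀ s : ℝ, ‖gm s (z s) (z (β s))‖ ≤ L * (‖z s‖ + ‖z (β s)‖) := by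
    intro s
    have := hgm_lip s (z s) (z (β s)) 0 0
    simpa [(hg0 s).2] using this
  -- continuity of frozen-argument composites
  have hPhip : ∀ c : Ek k × Ek m, ContinuousOn (fun s => gp s (z s) c) (Ici t₀) := by
    intro c r hr
    have hz1 : ContinuousWithinAt z (Ici t₀) r := hzc r hr
    have t1 : Tendsto (fun s => gp s (z s) c - gp s (z r) c) (𝓝[Ici t₀] r) (𝓝 0) := by
      apply squeeze_zero_norm (a := fun s => L * ‖z s - z r‖)
      · intro s
        simpa using hgp_lip s (z s) c (z r) c
      · have h2 : Tendsto (fun s => z s - z r) (𝓝[Ici t₀] r) (𝓝 (z r - z r)) :=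
          hz1.sub tendsto_const_nhds
        rw [sub_self] at h2
        have := (h2.norm).const_mul L
        simpa using this
    have t2 : Tendsto (fun s => gp s (z r) c) (𝓝[Ici t₀] r) (𝓝 (gp r (z r) c)) :=
      ((hgpc (z r) c).tendsto r).mono_left nhdsWithin_le_nhds
    have := t1.add t2
    simpa [ContinuousWithinAt] using this
  have hPhim : ∀ c : Ek k × Ek m, ContinuousOn (fun s => gm s (z s) c) (Ici t₀) := by
    intro c r hr
    have hz1 : ContinuousWithinAt z (Ici t₀) r := hzc r hr
    have t1 : Tendsto (fun s => gm s (z s) c - gm s (z r) c) (𝓝[Ici t₀] r) (𝓝 0) := by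
      apply squeeze_zero_norm (a := fun s => L * ‖z s - z r‖)
      · intro s
        simpa using hgm_lip s (z s) c (z r) c
      · have h2 : Tendsto (fun s => z s - z r) (𝓝[Ici t₀] r) (𝓝 (z r - z r)) :=
          hz1.sub tendsto_const_nhds
        rw [sub_self] at h2
        have := (h2.norm).const_mul L
        simpa using this
    have t2 : Tendsto (fun s => gm s (z r) c) (𝓝[Ici t₀] r) (𝓝 (gm r (z r) c)) :=
      ((hgmc (z r) c).tendsto r).mono_left nhdsWithin_le_nhds
    have := t1.add t2
    simpa [ContinuousWithinAt] using this
  -- cocycles and continuity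
  have ccU := cocycle_of Bp hBp U hUid hUderiv
  have ccV := cocycle_of Bm hBm V hVid hVderiv
  have hUcont1 : ∀ a : ℝ, Continuous fun t => U t a := fun a =>
    continuous_iff_continuousAt.mpr fun t => (hUderiv a t).continuousAt
  have hVcont1 : ∀ a : ℝ, Continuous fun t => V t a := fun a =>
    continuous_iff_continuousAt.mpr fun t => (hVderiv a t).continuousAt
  have hUc2 : Continuous fun s => U t₀ s := cont_snd U hUid ccU hUcont1 t₀
  have hVc2 : Continuous fun s => V t₀ s := cont_snd V hVid ccV hVcont1 t₀
  have happk : Continuous fun p : (Ek k →L[ℝ] Ek k) × Ek k => p.1 p.2 :=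
    isBoundedBilinearMap_apply.continuous
  have happm : Continuous fun p : (Ek m →L[ℝ] Ek m) × Ek m => p.1 p.2 :=
    isBoundedBilinearMap_apply.continuous
  -- integrability of the integrands
  have hwz : ∀ (i : ℤ) (s : ℝ), θ i ≤ s → s < θ (i + 1) → z (β s) = z (θ i) := by
    intro i s h1 h2
    rw [hβ i s h1 h2]
  have hHp : ∀ p : Ek k × Ek m,
      ContinuousOn (fun s => U t₀ s (gp s (z s) p)) (Ici t₀) := fun p =>
    happk.comp_continuousOn ((hUc2.continuousOn).prodMk (hPhip p))
  have hHm : ∀ p : Ek k × Ek m,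
      ContinuousOn (fun s => V t₀ s (gm s (z s) p)) (Ici t₀) := fun p =>
    happm.comp_continuousOn ((hVc2.continuousOn).prodMk (hPhim p))
  have intFp : ∀ a b : ℝ, t₀ ≤ a → a ≤ b →
      IntervalIntegrable (fun s => U t₀ s (gp s (z s) (z (β s)))) volume a b := by
    intro a b h0 hab
    obtain ⟨jj, hjj⟩ : ∃ j : ℤ, b ≤ θ j := (hθtop.eventually (eventually_ge_atTop b)).exists
    obtain ⟨ii, hii⟩ : ∃ i : ℤ, θ i ≤ a := (hθbot.eventually (eventually_le_atBot a)).exists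
    have hi' : θ (min ii jj) ≤ a := le_trans (hθmono.monotone (min_le_left _ _)) hii
    have hn : jj - ((jj - min ii jj).toNat : ℤ) = min ii jj := by
      have h1 : min ii jj ≤ jj := min_le_right _ _
      omega
    have := piece_ind θ (fun s => z (β s)) (fun i => z (θ i)) hwz t₀
      (fun s p => U t₀ s (gp s (z s) p)) hHp (jj - min ii jj).toNat jj a b h0 hab hjj
      (by rw [hn]; exact hi')
    exact this
  have intFm : ∀ a b : ℝ, t₀ ≤ a → a ≤ b →
      IntervalIntegrable (fun s => V t₀ s (gm s (z s) (z (β s)))) volume a b := by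
    intro a b h0 hab
    obtain ⟨jj, hjj⟩ : ∃ j : ℤ, b ≤ θ j := (hθtop.eventually (eventually_ge_atTop b)).exists
    obtain ⟨ii, hii⟩ : ∃ i : ℤ, θ i ≤ a := (hθbot.eventually (eventually_le_atBot a)).exists
    have hi' : θ (min ii jj) ≤ a := le_trans (hθmono.monotone (min_le_left _ _)) hii
    have hn : jj - ((jj - min ii jj).toNat : ℤ) = min ii jj := by
      have h1 : min ii jj ≤ jj := min_le_right _ _
      omega
    have := piece_ind θ (fun s => z (β s)) (fun i => z (θ i)) hwz t₀
      (fun s p => V t₀ s (gm s (z s) p)) hHm (jj - min ii jj).toNat jj a b h0 hab hjj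
      (by rw [hn]; exact hi')
    exact this
  -- right-continuity of integrands
  have hFpc : ∀ r, t₀ ≤ r → ContinuousWithinAt
      (fun s => U t₀ s (gp s (z s) (z (β s)))) (Ici r) r := by
    intro r hr
    obtain ⟨i, hi1, hi2⟩ := floor_ex r
    have hWc : ContinuousWithinAt (fun s => U t₀ s (gp s (z s) (z (θ i)))) (Ici r) r :=
      ((hHp (z (θ i))) r hr).mono (Ici_subset_Ici.mpr hr)
    refine hWc.congr_of_eventuallyEq ?_ ?_
    · have hmem : Ico r (θ (i + 1)) ∈ 𝓝[Ici r] r := Ico_mem_nhdsGE hi2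
      filter_upwards [hmem] with s hs
      rw [hβ i s (le_trans hi1 hs.1) hs.2]
    · rw [hβ i r hi1 hi2]
  have hFmc : ∀ r, t₀ ≤ r → ContinuousWithinAt
      (fun s => V t₀ s (gm s (z s) (z (β s)))) (Ici r) r := by
    intro r hr
    obtain ⟨i, hi1, hi2⟩ := floor_ex r
    have hWc : ContinuousWithinAt (fun s => V t₀ s (gm s (z s) (z (θ i)))) (Ici r) r :=
      ((hHm (z (θ i))) r hr).mono (Ici_subset_Ici.mpr hr)
    refine hWc.congr_of_eventuallyEq ?_ ?_
    · have hmem : Ico r (θ (i + 1)) ∈ 𝓝[Ici r] r := Ico_mem_nhdsGE hi2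
      filter_upwards [hmem] with s hs
      rw [hβ i s (le_trans hi1 hs.1) hs.2]
    · rw [hβ i r hi1 hi2]
  -- variation of constants
  have hu_voc : ∀ t, t₀ ≤ t → (z t).1
      = U t t₀ ((z t₀).1 + ∫ s in t₀..t, U t₀ s (gp s (z s) (z (β s)))) := by
    apply voc Bp hBp U hUid hUderiv t₀ (fun s => gp s (z s) (z (β s))) (fun t => (z t).1)
      (continuous_fst.comp_continuousOn hzc) ?_ intFp hFpc
    intro t ht
    have h := (hzd t (mem_Ici.mpr ht)).1.1
    rwa [Set.inter_eq_self_of_subset_left (Ici_subset_Ici.mpr ht)] at h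
  have hv_voc : ∀ t, t₀ ≤ t → (z t).2
      = V t t₀ ((z t₀).2 + ∫ s in t₀..t, V t₀ s (gm s (z s) (z (β s)))) := by
    apply voc Bm hBm V hVid hVderiv t₀ (fun s => gm s (z s) (z (β s))) (fun t => (z t).2)
      (continuous_snd.comp_continuousOn hzc) ?_ intFm hFmc
    intro t ht
    have h := (hzd t (mem_Ici.mpr ht)).1.2
    rwa [Set.inter_eq_self_of_subset_left (Ici_subset_Ici.mpr ht)] at h
  -- smallness
  have h4KL : 4 * K * L < σ := by
    have he : 1 < rexp (α * θb) := by
      rw [show (1:ℝ) = rexp 0 by simp]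
      exact Real.exp_lt_exp.mpr (by positivity)
    have h1 : (2:ℝ) ≤ K^2+1 := by nlinarith
    have h2 : (2:ℝ) ≤ 1 + rexp (α * θb) := by linarith
    have h22 : (2:ℝ)*2 ≤ (K^2+1)*(1+rexp (α * θb)) :=
      mul_le_mul h1 h2 (by norm_num) (by positivity)
    nlinarith [mul_le_mul_of_nonneg_left h22 (mul_pos hK0 hL).le]
  -- key constants
  have hq : 2 * K * L / σ < 1 / 2 := by
    rw [div_lt_iff₀ hσ]; linarith
  have hq0 : (0:ℝ) ≤ 2 * K * L / σ := by positivity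
  obtain ⟨i₀, hi₀1, hi₀2⟩ := floor_ex t₀
  -- contradiction setup
  by_contra hnot
  rw [tendsto_atTop_atTop] at hnot
  push_neg at hnot
  obtain ⟨R, hR⟩ := hnot
  set q : ℝ := 2 * K * L / σ with hqdef
  set C0 : ℝ := ‖z (θ i₀)‖ with hC0
  have hC0nn : 0 ≤ C0 := norm_nonneg _
  set Mfin : ℝ := 2 * (K * (‖z t₀‖ + R)) + C0 with hMfin
  -- main bound
  have main : ∀ T, t₀ ≤ T → ‖(z T).2‖ ≤ R → ∀ t, t ∈ Icc t₀ T → ‖z t‖ ≤ Mfin := by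
    intro T hT hvT
    have hR0 : 0 ≤ R := le_trans (norm_nonneg _) hvT
    obtain ⟨t₁, ht₁mem, ht₁max⟩ := isCompact_Icc.exists_isMaxOn (Set.nonempty_Icc.mpr hT)
      ((hzc.mono Icc_subset_Ici_self).norm)
    set M : ℝ := ‖z t₁‖ with hMdef
    have hM : ∀ s ∈ Icc t₀ T, ‖z s‖ ≤ M := fun s hs => ht₁max hs
    set M' : ℝ := max M C0 with hM'def
    have hM'0 : (0:ℝ) ≤ M' := le_trans (norm_nonneg (z t₁)) (le_max_left _ _)
    have hβb : ∀ s ∈ Icc t₀ T, ‖z (β s)‖ ≤ M' := by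
      intro s hs
      obtain ⟨i, hb1, hb2⟩ := floor_ex s
      rw [hβ i s hb1 hb2]
      by_cases hc : t₀ ≤ θ i
      · exact le_trans (hM (θ i) ⟨hc, le_trans hb1 hs.2⟩) (le_max_left _ _)
      · push_neg at hc
        have hii : i = i₀ := floor_uniq i i₀ t₀ hc.le (lt_of_le_of_lt hs.1 hb2) hi₀1 hi₀2
        rw [hii]
        exact le_max_right _ _
    have hGpB : ∀ s ∈ Icc t₀ T, ‖gp s (z s) (z (β s))‖ ≤ 2 * L * M' := by
      intro s hs
      refine le_trans (hgpb s) ?_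
      have h1 := hM s hs
      have h2 := hβb s hs
      have h3 : M ≤ M' := le_max_left _ _
      nlinarith
    have hGmB : ∀ s ∈ Icc t₀ T, ‖gm s (z s) (z (β s))‖ ≤ 2 * L * M' := by
      intro s hs
      refine le_trans (hgmb s) ?_
      have h1 := hM s hs
      have h2 := hβb s hs
      have h3 : M ≤ M' := le_max_left _ _
      nlinarith
    -- u-part bound
    have hub1 : ∀ t ∈ Icc t₀ T, ‖(z t).1‖ ≤ K * (‖z t₀‖ + R) + q * M' := by
      intro t ht
      rw [hu_voc t ht.1, map_add]
      have hint : IntervalIntegrable (fun s => U t₀ s (gp s (z s) (z (β s)))) volume t₀ t :=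
        intFp t₀ t le_rfl ht.1
      rw [← ContinuousLinearMap.intervalIntegral_comp_comm (U t t₀) hint]
      have hcongr : (∫ s in t₀..t, U t t₀ (U t₀ s (gp s (z s) (z (β s)))))
          = ∫ s in t₀..t, U t s (gp s (z s) (z (β s))) :=
        intervalIntegral.integral_congr (fun s _ => by
          rw [← ContinuousLinearMap.comp_apply, ccU t t₀ s])
      rw [hcongr]
      have b1 : ‖U t t₀ ((z t₀).1)‖ ≤ K * ‖z t₀‖ := by
        have hUK : ‖U t t₀‖ ≤ K := by
          refine le_trans (hU t₀ t ht.1) ?_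
          have hle1 : rexp (-σ * (t - t₀)) ≤ 1 := by
            apply Real.exp_le_one_iff.mpr
            nlinarith [ht.1]
          nlinarith
        calc ‖U t t₀ ((z t₀).1)‖ ≤ ‖U t t₀‖ * ‖(z t₀).1‖ := (U t t₀).le_opNorm _
          _ ≤ K * ‖z t₀‖ := mul_le_mul hUK (norm_fst_le _) (norm_nonneg _) hK0.le
      have b2 : ‖∫ s in t₀..t, U t s (gp s (z s) (z (β s)))‖ ≤ q * M' := by
        have hptwise : ∀ᵐ s ∂(volume.restrict (Set.uIoc t₀ t)),
            ‖U t s (gp s (z s) (z (β s)))‖ ≤ K * (2 * L * M') * rexp (σ * (s - t)) := by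
          rw [uIoc_of_le ht.1, ae_restrict_iff' measurableSet_Ioc]
          refine ae_of_all _ (fun s hs => ?_)
          have hsub : s ∈ Icc t₀ T := ⟨hs.1.le, hs.2.trans ht.2⟩
          have e1 : ‖U t s‖ ≤ K * rexp (σ * (s - t)) := by
            have := hU s t hs.2
            rwa [show -σ * (t - s) = σ * (s - t) by ring] at this
          calc ‖U t s (gp s (z s) (z (β s)))‖
              ≤ ‖U t s‖ * ‖gp s (z s) (z (β s))‖ := (U t s).le_opNorm _
            _ ≤ (K * rexp (σ * (s - t))) * (2 * L * M') :=
                mul_le_mul e1 (hGpB s hsub) (norm_nonneg _) (by positivity)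
            _ = K * (2 * L * M') * rexp (σ * (s - t)) := by ring
        have hgint : IntervalIntegrable (fun s => K * (2 * L * M') * rexp (σ * (s - t)))
            volume t₀ t := by
          have hgc : Continuous fun s : ℝ => K * (2 * L * M') * rexp (σ * (s - t)) :=
            continuous_const.mul (Real.continuous_exp.comp
              (continuous_const.mul (continuous_id.sub continuous_const)))
          exact hgc.intervalIntegrable _ _
        have h3 := intervalIntegral.norm_integral_le_abs_of_norm_le hptwise hgint
        have h4 : (∫ s in t₀..t, K * (2 * L * M') * rexp (σ * (s - t)))
            = K * (2 * L * M') * ∫ s in t₀..t, rexp (σ * (s - t)) :=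
          intervalIntegral.integral_const_mul _ _
        have h5 : (∫ s in t₀..t, rexp (σ * (s - t))) ≤ 1 / σ :=
          exp_int_le hσ t₀ t t ht.1 le_rfl
        have h6 : (0:ℝ) ≤ ∫ s in t₀..t, rexp (σ * (s - t)) := by
          apply intervalIntegral.integral_nonneg ht.1
          intro s _
          positivity
        have h7 : |∫ s in t₀..t, K * (2 * L * M') * rexp (σ * (s - t))|
            ≤ K * (2 * L * M') * (1 / σ) := by
          rw [h4, abs_of_nonneg (mul_nonneg (by positivity) h6)]
          exact mul_le_mul_of_nonneg_left h5 (by positivity)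
        have h8 : K * (2 * L * M') * (1 / σ) = q * M' := by
          rw [hqdef]; ring
        calc ‖∫ s in t₀..t, U t s (gp s (z s) (z (β s)))‖
            ≤ |∫ s in t₀..t, K * (2 * L * M') * rexp (σ * (s - t))| := h3
          _ ≤ K * (2 * L * M') * (1 / σ) := h7
          _ = q * M' := h8
      calc ‖U t t₀ ((z t₀).1) + ∫ s in t₀..t, U t s (gp s (z s) (z (β s)))‖
          ≤ ‖U t t₀ ((z t₀).1)‖ + ‖∫ s in t₀..t, U t s (gp s (z s) (z (β s)))‖ :=
            norm_add_le _ _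
        _ ≤ K * ‖z t₀‖ + q * M' := add_le_add b1 b2
        _ ≤ K * (‖z t₀‖ + R) + q * M' := by nlinarith
    -- v-part bound
    have hvb1 : ∀ t ∈ Icc t₀ T, ‖(z t).2‖ ≤ K * (‖z t₀‖ + R) + q * M' := by
      intro t ht
      have hiA : IntervalIntegrable (fun s => V t₀ s (gm s (z s) (z (β s)))) volume t₀ t :=
        intFm t₀ t le_rfl ht.1
      have hiB : IntervalIntegrable (fun s => V t₀ s (gm s (z s) (z (β s)))) volume t T :=
        intFm t T ht.1 ht.2
      have hvt : (z t).2 = V t T ((z T).2) - ∫ s in t..T, V t s (gm s (z s) (z (β s))) := by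
        have h1 := hv_voc t ht.1
        have h2 := hv_voc T hT
        have hsplit : (∫ s in t₀..t, V t₀ s (gm s (z s) (z (β s))))
            = (∫ s in t₀..T, V t₀ s (gm s (z s) (z (β s))))
              - ∫ s in t..T, V t₀ s (gm s (z s) (z (β s))) := by
          rw [← intervalIntegral.integral_add_adjacent_intervals hiA hiB]
          abel
        rw [h1, hsplit, add_sub, map_sub]
        congr 1
        · rw [h2, ← ContinuousLinearMap.comp_apply, ccV t T t₀]
        · rw [← ContinuousLinearMap.intervalIntegral_comp_comm (V t t₀) hiB]
          exact intervalIntegral.integral_congr (fun s _ => by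
            rw [← ContinuousLinearMap.comp_apply, ccV t t₀ s])
      rw [hvt]
      have b1 : ‖V t T ((z T).2)‖ ≤ K * R := by
        have hVK : ‖V t T‖ ≤ K := by
          refine le_trans (hV T t ht.2) ?_
          have hle1 : rexp (-σ * (T - t)) ≤ 1 := by
            apply Real.exp_le_one_iff.mpr
            nlinarith [ht.2]
          nlinarith
        calc ‖V t T ((z T).2)‖ ≤ ‖V t T‖ * ‖(z T).2‖ := (V t T).le_opNorm _
          _ ≤ K * R := mul_le_mul hVK hvT (norm_nonneg _) hK0.le
      have b2 : ‖∫ s in t..T, V t s (gm s (z s) (z (β s)))‖ ≤ q * M' := by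
        have hptwise : ∀ᵐ s ∂(volume.restrict (Set.uIoc t T)),
            ‖V t s (gm s (z s) (z (β s)))‖ ≤ K * (2 * L * M') * rexp (σ * (t - s)) := by
          rw [uIoc_of_le ht.2, ae_restrict_iff' measurableSet_Ioc]
          refine ae_of_all _ (fun s hs => ?_)
          have hsub : s ∈ Icc t₀ T := ⟨ht.1.trans hs.1.le, hs.2⟩
          have e1 : ‖V t s‖ ≤ K * rexp (σ * (t - s)) := by
            have := hV s t hs.1.le
            rwa [show -σ * (s - t) = σ * (t - s) by ring] at this
          calc ‖V t s (gm s (z s) (z (β s)))‖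
              ≤ ‖V t s‖ * ‖gm s (z s) (z (β s))‖ := (V t s).le_opNorm _
            _ ≤ (K * rexp (σ * (t - s))) * (2 * L * M') :=
                mul_le_mul e1 (hGmB s hsub) (norm_nonneg _) (by positivity)
            _ = K * (2 * L * M') * rexp (σ * (t - s)) := by ring
        have hgint : IntervalIntegrable (fun s => K * (2 * L * M') * rexp (σ * (t - s)))
            volume t T := by
          have hgc : Continuous fun s : ℝ => K * (2 * L * M') * rexp (σ * (t - s)) :=
            continuous_const.mul (Real.continuous_exp.comp
              (continuous_const.mul (continuous_const.sub continuous_id)))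
          exact hgc.intervalIntegrable _ _
        have h3 := intervalIntegral.norm_integral_le_abs_of_norm_le hptwise hgint
        have h4 : (∫ s in t..T, K * (2 * L * M') * rexp (σ * (t - s)))
            = K * (2 * L * M') * ∫ s in t..T, rexp (σ * (t - s)) :=
          intervalIntegral.integral_const_mul _ _
        have h5 : (∫ s in t..T, rexp (σ * (t - s))) ≤ 1 / σ :=
          exp_int_le' hσ t T t ht.2 le_rfl
        have h6 : (0:ℝ) ≤ ∫ s in t..T, rexp (σ * (t - s)) := by
          apply intervalIntegral.integral_nonneg ht.2
          intro s _
          positivity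
        have h7 : |∫ s in t..T, K * (2 * L * M') * rexp (σ * (t - s))|
            ≤ K * (2 * L * M') * (1 / σ) := by
          rw [h4, abs_of_nonneg (mul_nonneg (by positivity) h6)]
          exact mul_le_mul_of_nonneg_left h5 (by positivity)
        have h8 : K * (2 * L * M') * (1 / σ) = q * M' := by
          rw [hqdef]; ring
        calc ‖∫ s in t..T, V t s (gm s (z s) (z (β s)))‖
            ≤ |∫ s in t..T, K * (2 * L * M') * rexp (σ * (t - s))| := h3
          _ ≤ K * (2 * L * M') * (1 / σ) := h7
          _ = q * M' := h8
      calc ‖V t T ((z T).2) - ∫ s in t..T, V t s (gm s (z s) (z (β s)))‖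
          ≤ ‖V t T ((z T).2)‖ + ‖∫ s in t..T, V t s (gm s (z s) (z (β s)))‖ :=
            norm_sub_le _ _
        _ ≤ K * R + q * M' := add_le_add b1 b2
        _ ≤ K * (‖z t₀‖ + R) + q * M' := by nlinarith [norm_nonneg (z t₀)]
    have hzt : ∀ t ∈ Icc t₀ T, ‖z t‖ ≤ K * (‖z t₀‖ + R) + q * M' := fun t ht =>
      norm_prod_le_iff.mpr ⟨hub1 t ht, hvb1 t ht⟩
    have hMle : M ≤ K * (‖z t₀‖ + R) + q * M' := hzt t₁ ht₁mem
    intro t htmem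
    by_cases hcase : M ≤ C0
    · have h1 : ‖z t‖ ≤ C0 := le_trans (hM t htmem) hcase
      rw [hMfin]
      nlinarith [mul_nonneg hK0.le (add_nonneg (norm_nonneg (z t₀)) hR0)]
    · push_neg at hcase
      have hM'M : M' = M := max_eq_left hcase.le
      rw [hM'M] at hMle
      have hMnn : (0:ℝ) ≤ M := norm_nonneg (z t₁)
      have hM2A : M ≤ 2 * (K * (‖z t₀‖ + R)) := by nlinarith
      refine le_trans (hM t htmem) ?_
      rw [hMfin]
      linarith
  -- endgame
  push_neg at hub
  obtain ⟨tstar, htstar1, htstar2⟩ := hub Mfin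
  obtain ⟨T, hT1, hT2⟩ := hR (max tstar t₀)
  have hTt₀ : t₀ ≤ T := le_trans (le_max_right _ _) hT1
  have := main T hTt₀ hT2.le tstar ⟨htstar1, le_trans (le_max_left _ _) hT1⟩
  linarith
end
end
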